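/- arXiv:2301.05788 — 13 statements merged into one kernel-verified Lean document; each statement's English description precedes it below -/
import Mathlib

section
/- For every m×n complex matrix s, the linear map Ad_s : M_m(ℂ) → M_n(ℂ) defined by Ad_s(x) = s* x s is an exposed positive linear map, i.e., it generates an exposed ray of the convex cone of all positive linear maps from M_m(ℂ) to M_n(ℂ). -/
open Matrix ComplexOrder

noncomputable section

/-- A linear map between matrix algebras is positive if it sends positive
semidefinite matrices to positive semidefinite matrices. -/
def IsPosMap {m n : ℕ} (φ : Matrix (Fin m) (Fin m) ℂ →ₗ[ℂ] Matrix (Fin n) (Fin n) ℂ) : Prop :=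
  ∀ a : Matrix (Fin m) (Fin m) ℂ, a.PosSemidef → (φ a).PosSemidef

/-- A positive linear map `φ` is exposed (generates an exposed ray of the cone of
positive maps) if every positive map `ψ` such that `⟨η, φ(a) η⟩ = 0` implies
`⟨η, ψ(a) η⟩ = 0` (for `a` positive semidefinite) is a nonnegative multiple of `φ`. -/
def IsExposedMap {m n : ℕ} (φ : Matrix (Fin m) (Fin m) ℂ →ₗ[ℂ] Matrix (Fin n) (Fin n) ℂ) :
    Prop :=
  IsPosMap φ ∧
    ∀ ψ : Matrix (Fin m) (Fin m) ℂ →ₗ[ℂ] Matrix (Fin n) (Fin n) ℂ, IsPosMap ψ →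
      (∀ a : Matrix (Fin m) (Fin m) ℂ, a.PosSemidef → ∀ η : Fin n → ℂ,
        star η ⬝ᵥ (φ a) *ᵥ η = 0 → star η ⬝ᵥ (ψ a) *ᵥ η = 0) →
      ∃ c : ℝ, 0 ≤ c ∧ ψ = (c : ℂ) • φ

/-- The map `Ad_s : x ↦ s* x s`. -/
def adMap {m n : ℕ} (s : Matrix (Fin m) (Fin n) ℂ) :
    Matrix (Fin m) (Fin m) ℂ →ₗ[ℂ] Matrix (Fin n) (Fin n) ℂ where
  toFun x := sᴴ * x * s
  map_add' x y := by simp [Matrix.add_mul, Matrix.mul_add]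
  map_smul' c x := by simp [Matrix.smul_mul, Matrix.mul_smul]

/-- The transpose map on matrices, as a linear map. -/
def transposeLM (m : ℕ) : Matrix (Fin m) (Fin m) ℂ →ₗ[ℂ] Matrix (Fin m) (Fin m) ℂ where
  toFun x := xᵀ
  map_add' x y := Matrix.transpose_add x y
  map_smul' c x := by simp


/-!
Let `ψ` be positive and vanish wherever `Ad_s` does. Everything rests on one fact: a positive
semidefinite matrix whose quadratic form vanishes on `w^⊥` is a nonnegative multiple of `w w*`.
Applied to `ψ(ξ ξ*)`, which vanishes on `(s* ξ)^⊥`, it gives `ψ(ξ ξ*) = a(ξ) Ad_s(ξ ξ*)`.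
Applied to the density matrix of the positive functional `x ↦ ⟪η, ψ(x) η⟫`, which vanishes on
`(s η)^⊥`, it gives `⟪η, ψ(x) η⟫ = b(η) ⟪η, Ad_s(x) η⟫`. Evaluating both at `ξ ξ*` shows
`a(ξ) = b(η)` whenever `⟪ξ, s η⟫ ≠ 0`; any two `η` with `s η ≠ 0` share such a `ξ`, so `b` is
constant where it matters, and since a complex matrix is determined by its quadratic form,
`ψ = b • Ad_s`.
-/

namespace Matrix

variable {𝕜 : Type*} [RCLike 𝕜] {l n : Type*} [Fintype n]

lemma exists_eq_vecMulVec_star_of_mulVec_eq_zero {B : Matrix l n 𝕜} {w : n → 𝕜}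
    (h : ∀ η, star w ⬝ᵥ η = 0 → B *ᵥ η = 0) : ∃ u, B = vecMulVec u (star w) := by
  rcases eq_or_ne w 0 with rfl | hw
  · exact ⟨0, ext_iff_mulVec.mpr fun η => by simp [h η]⟩
  have hN : star w ⬝ᵥ w ≠ 0 := fun h0 => hw (dotProduct_star_self_eq_zero.mp h0)
  refine ⟨(star w ⬝ᵥ w)⁻¹ • B *ᵥ w, ext_iff_mulVec.mpr fun η => ?_⟩
  have h₀ := h (η - ((star w ⬝ᵥ η) / (star w ⬝ᵥ w)) • w)
    (by rw [dotProduct_sub, dotProduct_smul, smul_eq_mul, div_mul_cancel₀ _ hN, sub_self])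
  rw [mulVec_sub, mulVec_smul, sub_eq_zero] at h₀
  rw [h₀, vecMulVec_mulVec, op_smul_eq_smul, smul_smul, div_eq_mul_inv]

lemma PosSemidef.exists_eq_smul_vecMulVec_star {M : Matrix n n 𝕜} (hM : M.PosSemidef)
    {w : n → 𝕜} (h : ∀ η, star w ⬝ᵥ η = 0 → star η ⬝ᵥ M *ᵥ η = 0) :
    ∃ c : 𝕜, 0 ≤ c ∧ M = c • vecMulVec w (star w) := by
  classical
  open scoped MatrixOrder in
  obtain ⟨B, rfl⟩ := CStarAlgebra.nonneg_iff_eq_star_mul_self.mp hM.nonneg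
  obtain ⟨u, rfl⟩ := exists_eq_vecMulVec_star_of_mulVec_eq_zero (B := B) (w := w) fun η hη => by
    have := h η hη
    rwa [← mulVec_mulVec, star_eq_conjTranspose, dotProduct_mulVec, vecMul_conjTranspose,
      star_star, dotProduct_star_self_eq_zero] at this
  refine ⟨star u ⬝ᵥ u, dotProduct_star_self_nonneg u, ?_⟩
  rw [star_eq_conjTranspose, conjTranspose_vecMulVec, star_star, vecMulVec_mul_vecMulVec,
    vecMulVec_smul]

lemma trace_mul_vecMulVec_star (A : Matrix n n 𝕜) (v : n → 𝕜) :
    trace (A * vecMulVec v (star v)) = star v ⬝ᵥ A *ᵥ v := by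
  rw [mul_vecMulVec, trace_vecMulVec, dotProduct_comm]

def densityMatrix [DecidableEq n] (f : Matrix n n 𝕜 →ₗ[𝕜] 𝕜) : Matrix n n 𝕜 :=
  of fun i j => f (single j i 1)

lemma trace_mul_densityMatrix [DecidableEq n] (f : Matrix n n 𝕜 →ₗ[𝕜] 𝕜) (x : Matrix n n 𝕜) :
    trace (x * densityMatrix f) = f x := by
  conv_rhs => rw [matrix_eq_sum_single x]
  simp only [map_sum, trace, mul_apply, densityMatrix, of_apply, diag]
  refine Finset.sum_congr rfl fun i _ => Finset.sum_congr rfl fun j _ => ?_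
  rw [← smul_eq_mul, ← map_smul, smul_single, smul_eq_mul, mul_one]

lemma star_dotProduct_densityMatrix_mulVec [DecidableEq n] (f : Matrix n n 𝕜 →ₗ[𝕜] 𝕜)
    (ξ : n → 𝕜) : star ξ ⬝ᵥ densityMatrix f *ᵥ ξ = f (vecMulVec ξ (star ξ)) := by
  rw [← trace_mul_densityMatrix, trace_mul_comm, trace_mul_vecMulVec_star]

def vectorFunctional (η : n → 𝕜) : Matrix n n 𝕜 →ₗ[𝕜] 𝕜 where
  toFun x := star η ⬝ᵥ x *ᵥ η
  map_add' x y := by rw [add_mulVec, dotProduct_add]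
  map_smul' c x := by rw [smul_mulVec, dotProduct_smul, RingHom.id_apply]

@[simp]
lemma vectorFunctional_apply (η : n → 𝕜) (x : Matrix n n 𝕜) :
    vectorFunctional η x = star η ⬝ᵥ x *ᵥ η := rfl

lemma ext_of_vectorFunctional {A B : Matrix n n ℂ}
    (h : ∀ η, vectorFunctional η A = vectorFunctional η B) : A = B := by
  classical
  apply toEuclideanLin.injective
  rw [← ext_inner_map]
  intro x
  rw [← inner_conj_symm, ← inner_conj_symm (toEuclideanLin B x)]
  simpa [EuclideanSpace.inner_eq_star_dotProduct, dotProduct_comm _ (star _)] using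
    congrArg star (h x)

lemma PosSemidef.of_vectorFunctional_nonneg {A : Matrix n n ℂ}
    (h : ∀ η, 0 ≤ vectorFunctional η A) : A.PosSemidef := by
  refine .of_dotProduct_mulVec_nonneg (ext_of_vectorFunctional fun η => ?_) h
  rw [vectorFunctional_apply, dotProduct_mulVec, vecMul_conjTranspose, star_star, star_dotProduct]
  exact (IsSelfAdjoint.of_nonneg (h η)).star_eq

lemma vectorFunctional_vecMulVec_star (w η : n → 𝕜) :
    vectorFunctional η (vecMulVec w (star w)) = star (star w ⬝ᵥ η) * (star w ⬝ᵥ η) := by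
  rw [vectorFunctional_apply, vecMulVec_mulVec, op_smul_eq_smul, dotProduct_smul, smul_eq_mul,
    mul_comm, ← star_dotProduct]

lemma exists_forall_star_dotProduct_ne_zero {ι : Type*} [Finite ι] (v : ι → n → 𝕜)
    (hv : ∀ i, v i ≠ 0) : ∃ ξ : n → 𝕜, ∀ i, star ξ ⬝ᵥ v i ≠ 0 := by
  classical
  obtain ⟨f, hf⟩ := Module.exists_dual_forall_apply_ne_zero (K := 𝕜) v hv
  refine ⟨star ((dotProductEquiv 𝕜 n).symm f), fun i => ?_⟩
  rw [star_star, ← dotProductEquiv_apply_apply, LinearEquiv.apply_symm_apply]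
  exact hf i

end Matrix

section adMap

variable {m n : ℕ} (s : Matrix (Fin m) (Fin n) ℂ)

lemma isPosMap_adMap : IsPosMap (adMap s) := fun _ ha => ha.conjTranspose_mul_mul_same s

lemma adMap_apply (x : Matrix (Fin m) (Fin m) ℂ) : adMap s x = sᴴ * x * s := rfl

lemma vectorFunctional_comp_adMap (η : Fin n → ℂ) :
    vectorFunctional η ∘ₗ adMap s = vectorFunctional (s *ᵥ η) := by
  ext x
  simp [adMap_apply, star_mulVec, dotProduct_mulVec, vecMul_vecMul, Matrix.mul_assoc]

lemma adMap_vecMulVec_star (ξ : Fin m → ℂ) :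
    adMap s (vecMulVec ξ (star ξ)) = vecMulVec (sᴴ *ᵥ ξ) (star (sᴴ *ᵥ ξ)) := by
  rw [adMap_apply, mul_vecMulVec, vecMulVec_mul, star_mulVec, conjTranspose_conjTranspose]

variable {s} {ψ : Matrix (Fin m) (Fin m) ℂ →ₗ[ℂ] Matrix (Fin n) (Fin n) ℂ}

lemma exists_eq_smul_adMap_vecMulVec_star (hψ : IsPosMap ψ)
    (hz : ∀ ξ η, star ξ ⬝ᵥ s *ᵥ η = 0 → vectorFunctional η (ψ (vecMulVec ξ (star ξ))) = 0)
    (ξ : Fin m → ℂ) :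
    ∃ c : ℂ, ψ (vecMulVec ξ (star ξ)) = c • adMap s (vecMulVec ξ (star ξ)) := by
  rw [adMap_vecMulVec_star]
  obtain ⟨c, -, hc⟩ := (hψ _ (posSemidef_vecMulVec_self_star ξ)).exists_eq_smul_vecMulVec_star
    (w := sᴴ *ᵥ ξ) fun η hη => hz ξ η <| by
      rwa [star_mulVec, conjTranspose_conjTranspose, ← dotProduct_mulVec] at hη
  exact ⟨c, hc⟩

lemma exists_vectorFunctional_comp_eq_smul (hψ : IsPosMap ψ)
    (hz : ∀ ξ η, star ξ ⬝ᵥ s *ᵥ η = 0 → vectorFunctional η (ψ (vecMulVec ξ (star ξ))) = 0)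
    (η : Fin n → ℂ) :
    ∃ c : ℂ, 0 ≤ c ∧ vectorFunctional η ∘ₗ ψ = c • vectorFunctional (s *ᵥ η) := by
  set f := vectorFunctional η ∘ₗ ψ
  have hρ : (densityMatrix f).PosSemidef := PosSemidef.of_vectorFunctional_nonneg fun ξ => by
    rw [vectorFunctional_apply, star_dotProduct_densityMatrix_mulVec]
    exact (hψ _ (posSemidef_vecMulVec_self_star ξ)).dotProduct_mulVec_nonneg η
  obtain ⟨c, hc₀, hc⟩ := hρ.exists_eq_smul_vecMulVec_star (w := s *ᵥ η) fun ξ hξ => by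
    rw [star_dotProduct_densityMatrix_mulVec]
    exact hz ξ η (by rw [star_dotProduct, hξ, star_zero])
  refine ⟨c, hc₀, LinearMap.ext fun x => ?_⟩
  rw [← trace_mul_densityMatrix, hc, mul_smul_comm, trace_smul, trace_mul_vecMulVec_star]
  rfl

lemma exists_forall_vectorFunctional_comp_eq_smul (hψ : IsPosMap ψ)
    (hz : ∀ ξ η, star ξ ⬝ᵥ s *ᵥ η = 0 → vectorFunctional η (ψ (vecMulVec ξ (star ξ))) = 0) :
    ∃ c : ℂ, 0 ≤ c ∧ ∀ η, vectorFunctional η ∘ₗ ψ = c • vectorFunctional (s *ᵥ η) := by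
  choose a ha using exists_eq_smul_adMap_vecMulVec_star hψ hz
  choose b hb₀ hb using exists_vectorFunctional_comp_eq_smul hψ hz
  have hab : ∀ ξ η, star ξ ⬝ᵥ s *ᵥ η ≠ 0 → a ξ = b η := fun ξ η h => by
    have := LinearMap.congr_fun (hb η) (vecMulVec ξ (star ξ))
    rw [LinearMap.comp_apply, ha, map_smul, ← LinearMap.comp_apply, vectorFunctional_comp_adMap,
      LinearMap.smul_apply, vectorFunctional_vecMulVec_star] at this
    exact smul_left_injective ℂ (mul_ne_zero (star_ne_zero.mpr h) h) this
  have hb_eq : ∀ η₁ η₂, s *ᵥ η₁ ≠ 0 → s *ᵥ η₂ ≠ 0 → b η₁ = b η₂ := fun η₁ η₂ h₁ h₂ => by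
    obtain ⟨ξ, hξ⟩ := exists_forall_star_dotProduct_ne_zero ![s *ᵥ η₁, s *ᵥ η₂]
      (by simp [Fin.forall_fin_two, h₁, h₂])
    exact (hab ξ η₁ (hξ 0)).symm.trans (hab ξ η₂ (hξ 1))
  obtain ⟨c, hc₀, hc⟩ : ∃ c : ℂ, 0 ≤ c ∧ ∀ η, s *ᵥ η ≠ 0 → b η = c := by
    by_cases hs : ∃ η₀, s *ᵥ η₀ ≠ 0
    · obtain ⟨η₀, hη₀⟩ := hs
      exact ⟨b η₀, hb₀ η₀, fun η h => hb_eq η η₀ h hη₀⟩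
    · exact ⟨0, le_rfl, fun η h => absurd ⟨η, h⟩ hs⟩
  refine ⟨c, hc₀, fun η => ?_⟩
  rcases eq_or_ne (s *ᵥ η) 0 with h | h
  · ext x
    simp [hb η, h]
  · rw [hb η, hc η h]

end adMap

/-- (Marciniak) For every `m × n` complex matrix `s`, the map `Ad_s : x ↦ s* x s`
generates an exposed ray of the cone of positive linear maps from `M_m(ℂ)` to `M_n(ℂ)`. -/
theorem adMap_isExposed (m n : ℕ) (s : Matrix (Fin m) (Fin n) ℂ) :
    IsExposedMap (adMap s) := by
  refine ⟨isPosMap_adMap s, fun ψ hψ hz => ?_⟩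
  obtain ⟨c, hc₀, hc⟩ := exists_forall_vectorFunctional_comp_eq_smul hψ fun ξ η h =>
    hz _ (posSemidef_vecMulVec_self_star ξ) η <| by
      rw [← vectorFunctional_apply, ← LinearMap.comp_apply, vectorFunctional_comp_adMap,
        vectorFunctional_vecMulVec_star, h, mul_zero]
  obtain ⟨r, hr, rfl⟩ := RCLike.nonneg_iff_exists_ofReal.mp hc₀
  refine ⟨r, hr, LinearMap.ext fun x => ext_of_vectorFunctional fun η => ?_⟩
  simpa [← vectorFunctional_comp_adMap] using LinearMap.congr_fun (hc η) x

end
end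

section
/- For every m×n complex matrix s, the linear map Ad_s ∘ t : M_m(ℂ) → M_n(ℂ) defined by x ↦ s* xᵀ s (where xᵀ is the transpose of x) is an exposed positive linear map. -/
open Matrix ComplexOrder

noncomputable section

/-!
Let `φ = Ad_s ∘ t` and let `ψ` be a positive map vanishing wherever `φ` does. Positivity of `ψ`
forces `ψ (v v*)` to be a multiple `λ v ≥ 0` of the rank-one matrix `φ (v v*) = w w*`, where
`w = s* v̄`. For fixed `η`, the compression `v ↦ η* ψ (v v*) η` is a positive semidefinite
quadratic form in `v` that vanishes on the hyperplane `⟨w, η⟩ = 0`, hence equals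
`ρ_η |⟨w, η⟩|²`; so `λ v = ρ_η` whenever `⟨w, η⟩ ≠ 0`. Any two nonzero `w`s are non-orthogonal
to a common `η`, so `λ` is constant, and the rank-one projections `v v*` span `M_m`.
-/

namespace Matrix

theorem single_eq_smul_single_one {m n α : Type*} [DecidableEq m] [DecidableEq n]
    [MulZeroOneClass α] (i : m) (j : n) (c : α) :
    single i j c = c • single i j (1 : α) := by
  rw [smul_single, smul_eq_mul, mul_one]

theorem exists_star_dotProduct_ne_zero {ι R : Type*} [Fintype ι] [CommRing R] [PartialOrder R]
    [StarRing R] [StarOrderedRing R] [NoZeroDivisors R] {a b : ι → R} (ha : a ≠ 0) (hb : b ≠ 0) :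
    ∃ η, star a ⬝ᵥ η ≠ 0 ∧ star b ⬝ᵥ η ≠ 0 := by
  have ha' : star a ⬝ᵥ a ≠ 0 := mt dotProduct_star_self_eq_zero.1 ha
  have hb' : star b ⬝ᵥ b ≠ 0 := mt dotProduct_star_self_eq_zero.1 hb
  by_cases hba : star b ⬝ᵥ a = 0
  · refine ⟨a + b, ?_, ?_⟩
    · rwa [dotProduct_add, star_dotProduct a b, hba, star_zero, add_zero]
    · rwa [dotProduct_add, hba, zero_add]
  · exact ⟨a, ha', hba⟩

theorem star_dotProduct_vecMulVec_mulVec {ι R : Type*} [Fintype ι] [CommSemiring R] [StarRing R]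
    (w x : ι → R) :
    star x ⬝ᵥ vecMulVec w (star w) *ᵥ x = star (star w ⬝ᵥ x) * (star w ⬝ᵥ x) := by
  rw [vecMulVec_mulVec, op_smul_eq_smul, dotProduct_smul, star_dotProduct x w, smul_eq_mul,
    mul_comm]

variable {ι : Type*} [Fintype ι]

theorem posSemidef_of_forall_dotProduct_mulVec_nonneg {A : Matrix ι ι ℂ}
    (h : ∀ x, 0 ≤ star x ⬝ᵥ A *ᵥ x) : A.PosSemidef := by
  classical
  rw [← isPositive_toEuclideanLin_iff, LinearMap.isPositive_iff_complex]
  intro x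
  obtain ⟨hre, him⟩ := Complex.nonneg_iff.1 (h x.ofLp)
  rw [EuclideanSpace.inner_eq_star_dotProduct, ofLp_toLpLin, toLin'_apply, dotProduct_comm,
    star_dotProduct]
  refine ⟨Complex.ext ?_ ?_, ?_⟩ <;> simp [← him, hre]

-- For `ζ ⊥ w`, `⟪ζ, A w⟫ = ⟪A ζ, w⟫ = 0`, so `A *ᵥ w` lies on the line through `w`.
theorem IsHermitian.mulVec_eq_smul_of_forall_mulVec_eq_zero {A : Matrix ι ι ℂ}
    (hA : A.IsHermitian) {w : ι → ℂ} (hw : w ≠ 0)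
    (hker : ∀ x, star w ⬝ᵥ x = 0 → A *ᵥ x = 0) :
    A *ᵥ w = ((star w ⬝ᵥ A *ᵥ w) / (star w ⬝ᵥ w)) • w := by
  have ht : star w ⬝ᵥ w ≠ 0 := mt dotProduct_star_self_eq_zero.1 hw
  set ζ := A *ᵥ w - ((star w ⬝ᵥ A *ᵥ w) / (star w ⬝ᵥ w)) • w
  have hζ : star w ⬝ᵥ ζ = 0 := by
    rw [dotProduct_sub, dotProduct_smul, smul_eq_mul, div_mul_cancel₀ _ ht, sub_self]
  have h₁ : star ζ ⬝ᵥ A *ᵥ w = 0 := by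
    rw [dotProduct_mulVec, ← hA.eq, ← star_mulVec, hker ζ hζ, star_zero, zero_dotProduct]
  have h₂ : star ζ ⬝ᵥ w = 0 := by rw [star_dotProduct, hζ, star_zero]
  have hζζ : star ζ ⬝ᵥ ζ = 0 := by
    rw [dotProduct_sub, h₁, dotProduct_smul, h₂, smul_zero, sub_zero]
  exact sub_eq_zero.1 (dotProduct_star_self_eq_zero.1 hζζ)

theorem PosSemidef.exists_eq_smul_vecMulVec {A : Matrix ι ι ℂ} (hA : A.PosSemidef) {w : ι → ℂ}
    (h : ∀ x, star w ⬝ᵥ x = 0 → star x ⬝ᵥ A *ᵥ x = 0) :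
    ∃ c : ℝ, 0 ≤ c ∧ A = (c : ℂ) • vecMulVec w (star w) := by
  have hker : ∀ x, star w ⬝ᵥ x = 0 → A *ᵥ x = 0 := fun x hx =>
    (hA.dotProduct_mulVec_zero_iff x).1 (h x hx)
  rcases eq_or_ne w 0 with rfl | hw
  · refine ⟨0, le_rfl, ext_iff_mulVec.2 fun x => ?_⟩
    simp [hker x (by simp)]
  have heig := hA.1.mulVec_eq_smul_of_forall_mulVec_eq_zero hw hker
  set t := star w ⬝ᵥ w
  set r := star w ⬝ᵥ A *ᵥ w
  have ht : t ≠ 0 := mt dotProduct_star_self_eq_zero.1 hw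
  have hproj : ∀ x, A *ᵥ x = (star w ⬝ᵥ x / t) • A *ᵥ w := fun x => by
    have := hker (x - (star w ⬝ᵥ x / t) • w) (by
      rw [dotProduct_sub, dotProduct_smul, smul_eq_mul, div_mul_cancel₀ _ ht, sub_self])
    rwa [mulVec_sub, mulVec_smul, sub_eq_zero] at this
  have hr_real : (r.re : ℂ) = r := (Complex.eq_re_of_ofReal_le (r := 0)
    (by rw [Complex.ofReal_zero]; exact hA.dotProduct_mulVec_nonneg w)).symm
  have ht_real : (t.re : ℂ) = t := (Complex.eq_re_of_ofReal_le (r := 0)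
    (by rw [Complex.ofReal_zero]; exact dotProduct_star_self_nonneg w)).symm
  refine ⟨r.re / t.re ^ 2, div_nonneg (Complex.nonneg_iff.1 (hA.dotProduct_mulVec_nonneg w)).1
    (sq_nonneg _), ext_iff_mulVec.2 fun x => ?_⟩
  rw [hproj, heig, smul_mulVec, vecMulVec_mulVec, op_smul_eq_smul, smul_smul, smul_smul]
  congr 1
  push_cast
  rw [hr_real, ht_real]
  field_simp

omit [Fintype ι] in
theorem vecMulVec_star_polarization (u v : ι → ℂ) :
    vecMulVec u (star v) =
      (4⁻¹ : ℂ) • vecMulVec (u + v) (star (u + v))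
      - (4⁻¹ : ℂ) • vecMulVec (u - v) (star (u - v))
      + (Complex.I / 4) • vecMulVec (u + Complex.I • v) (star (u + Complex.I • v))
      - (Complex.I / 4) • vecMulVec (u - Complex.I • v) (star (u - Complex.I • v)) := by
  ext i j
  simp only [add_apply, sub_apply, smul_apply, vecMulVec_apply, Pi.add_apply, Pi.sub_apply,
    Pi.star_apply, Pi.smul_apply, smul_eq_mul, star_add, star_sub, star_mul', Complex.star_def,
    Complex.conj_I]
  ring_nf
  rw [Complex.I_sq]
  ring

theorem span_vecMulVec_star_self_eq_top :
    Submodule.span ℂ (Set.range fun v : ι → ℂ => vecMulVec v (star v)) = ⊤ := by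
  classical
  set S := Submodule.span ℂ (Set.range fun v : ι → ℂ => vecMulVec v (star v))
  have hself : ∀ v, vecMulVec v (star v) ∈ S := fun v => Submodule.subset_span ⟨v, rfl⟩
  have hpolar : ∀ u v : ι → ℂ, vecMulVec u (star v) ∈ S := fun u v => by
    rw [vecMulVec_star_polarization u v]
    exact S.sub_mem (S.add_mem (S.sub_mem (S.smul_mem _ (hself _)) (S.smul_mem _ (hself _)))
      (S.smul_mem _ (hself _))) (S.smul_mem _ (hself _))
  refine eq_top_iff.2 fun x _ => x.induction_on' S.zero_mem (fun _ _ => S.add_mem) fun i j c => ?_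
  have hstar : star (Pi.single j 1 : ι → ℂ) = Pi.single j 1 := by rw [← Pi.single_star, star_one]
  rw [single_eq_smul_single_one, single_eq_single_vecMulVec_single, ← hstar]
  exact S.smul_mem c (hpolar _ _)

theorem exists_star_dotProduct_apply_vecMulVec_mulVec_eq {κ : Type*} [Fintype κ]
    (Φ : Matrix ι ι ℂ →ₗ[ℂ] Matrix κ κ ℂ) (η : κ → ℂ) :
    ∃ N : Matrix ι ι ℂ, ∀ v,
      star η ⬝ᵥ Φ (vecMulVec v (star v)) *ᵥ η = star v ⬝ᵥ N *ᵥ v := by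
  classical
  refine ⟨of fun a b => star η ⬝ᵥ Φ (single b a 1) *ᵥ η, fun v => ?_⟩
  conv_lhs => rw [matrix_eq_sum_single (vecMulVec v (star v))]
  simp only [single_eq_smul_single_one _ _ (vecMulVec _ _ _ _), map_sum, map_smul, sum_mulVec,
    smul_mulVec, dotProduct_sum, dotProduct_smul]
  have hquad : ∀ N : Matrix ι ι ℂ, star v ⬝ᵥ N *ᵥ v = ∑ a, ∑ b, star (v a) * N a b * v b :=
    fun N => by simp only [dotProduct, mulVec, Finset.mul_sum, Pi.star_apply, mul_assoc]
  simp only [hquad, of_apply, vecMulVec_apply, Pi.star_apply, smul_eq_mul]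
  rw [Finset.sum_comm]
  refine Finset.sum_congr rfl fun i _ => Finset.sum_congr rfl fun j _ => by ring

end Matrix

section

variable {m n : ℕ} (s : Matrix (Fin m) (Fin n) ℂ)

theorem isPosMap_adMap_comp_transpose : IsPosMap ((adMap s).comp (transposeLM m)) :=
  fun _ ha => ha.transpose.conjTranspose_mul_mul_same s

theorem adMap_comp_transpose_vecMulVec (v : Fin m → ℂ) :
    (adMap s).comp (transposeLM m) (vecMulVec v (star v)) =
      vecMulVec (sᴴ *ᵥ star v) (star (sᴴ *ᵥ star v)) := by
  change sᴴ * (vecMulVec v (star v))ᵀ * s = _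
  rw [transpose_vecMulVec, mul_vecMulVec, vecMulVec_mul, star_mulVec, star_star,
    conjTranspose_conjTranspose]

variable {s} {ψ : Matrix (Fin m) (Fin m) ℂ →ₗ[ℂ] Matrix (Fin n) (Fin n) ℂ}

theorem exists_eq_of_star_dotProduct_ne_zero (hψ : IsPosMap ψ) {lam : (Fin m → ℂ) → ℝ}
    (hlam : ∀ v, ψ (vecMulVec v (star v)) =
      (lam v : ℂ) • vecMulVec (sᴴ *ᵥ star v) (star (sᴴ *ᵥ star v)))
    (η : Fin n → ℂ) :
    ∃ ρ : ℝ, ∀ v, star (sᴴ *ᵥ star v) ⬝ᵥ η ≠ 0 → lam v = ρ := by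
  set z := star (s *ᵥ η)
  have hz : ∀ v, star (sᴴ *ᵥ star v) ⬝ᵥ η = star z ⬝ᵥ v := fun v => by
    rw [star_mulVec, star_star, conjTranspose_conjTranspose, ← dotProduct_mulVec, star_star,
      dotProduct_comm]
  obtain ⟨N, hN⟩ := exists_star_dotProduct_apply_vecMulVec_mulVec_eq ψ η
  have hNv : ∀ v, star v ⬝ᵥ N *ᵥ v = lam v * (star (star z ⬝ᵥ v) * (star z ⬝ᵥ v)) := fun v => by
    rw [← hN, hlam, smul_mulVec, dotProduct_smul, star_dotProduct_vecMulVec_mulVec, hz,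
      smul_eq_mul]
  have hNpsd : N.PosSemidef := posSemidef_of_forall_dotProduct_mulVec_nonneg fun v =>
    hN v ▸ (hψ _ (posSemidef_vecMulVec_self_star v)).dotProduct_mulVec_nonneg η
  obtain ⟨ρ, -, hρ⟩ := hNpsd.exists_eq_smul_vecMulVec fun v hv => by
    rw [hNv, hv, mul_zero, mul_zero]
  refine ⟨ρ, fun v hv => ?_⟩
  have hρv := hNv v
  rw [hρ, smul_mulVec, dotProduct_smul, star_dotProduct_vecMulVec_mulVec, smul_eq_mul] at hρv
  rw [hz] at hv
  exact_mod_cast (mul_right_cancel₀ (mul_ne_zero (star_ne_zero.2 hv) hv) hρv).symm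

theorem exists_forall_apply_vecMulVec_eq_smul (hψ : IsPosMap ψ)
    (hvan : ∀ a : Matrix (Fin m) (Fin m) ℂ, a.PosSemidef → ∀ η : Fin n → ℂ,
      star η ⬝ᵥ ((adMap s).comp (transposeLM m) a) *ᵥ η = 0 → star η ⬝ᵥ (ψ a) *ᵥ η = 0) :
    ∃ c : ℝ, 0 ≤ c ∧ ∀ v, ψ (vecMulVec v (star v)) =
      (c : ℂ) • (adMap s).comp (transposeLM m) (vecMulVec v (star v)) := by
  have hrank : ∀ v, ∃ c : ℝ, 0 ≤ c ∧ ψ (vecMulVec v (star v)) =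
      (c : ℂ) • vecMulVec (sᴴ *ᵥ star v) (star (sᴴ *ᵥ star v)) := fun v =>
    (hψ _ (posSemidef_vecMulVec_self_star v)).exists_eq_smul_vecMulVec fun η hη =>
      hvan _ (posSemidef_vecMulVec_self_star v) η (by
        rw [adMap_comp_transpose_vecMulVec, star_dotProduct_vecMulVec_mulVec, hη, mul_zero])
  choose lam hlam0 hlam using hrank
  simp only [adMap_comp_transpose_vecMulVec]
  obtain h | ⟨v₀, hv₀⟩ := forall_or_exists_not fun v => sᴴ *ᵥ star v = 0
  · exact ⟨0, le_rfl, fun v => by simp [hlam v, h v]⟩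
  refine ⟨lam v₀, hlam0 v₀, fun v => ?_⟩
  rcases eq_or_ne (sᴴ *ᵥ star v) 0 with hv | hv
  · simp [hlam v, hv]
  obtain ⟨η, h₀, h⟩ := exists_star_dotProduct_ne_zero hv₀ hv
  obtain ⟨ρ, hρ⟩ := exists_eq_of_star_dotProduct_ne_zero hψ hlam η
  rw [hlam v, hρ v h, hρ v₀ h₀]

end

/-- (Marciniak) For every `m × n` complex matrix `s`, the map
`Ad_s ∘ t : x ↦ s* xᵀ s` generates an exposed ray of the cone of positive linear
maps from `M_m(ℂ)` to `M_n(ℂ)`. -/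
theorem adMap_comp_transpose_isExposed (m n : ℕ) (s : Matrix (Fin m) (Fin n) ℂ) :
    IsExposedMap ((adMap s).comp (transposeLM m)) := by
  refine ⟨isPosMap_adMap_comp_transpose s, fun ψ hψ hvan => ?_⟩
  obtain ⟨c, hc, hψc⟩ := exists_forall_apply_vecMulVec_eq_smul hψ hvan
  exact ⟨c, hc, LinearMap.ext_on_range span_vecMulVec_star_self_eq_top fun v => hψc v⟩
end
end

section
/- Let r ≤ n and let S : M_r(ℂ) → M_n(ℂ) be the corner embedding sending a ∈ M_r(ℂ) to the n×n matrix having a as its top-left r×r block and zeros elsewhere. If φ : M_m(ℂ) → M_r(ℂ) is an exposed positive linear map, then S ∘ φ : M_m(ℂ) → M_n(ℂ) is an exposed positive linear map. -/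
open Matrix ComplexOrder

noncomputable section

/-- The corner embedding `S : M_r(ℂ) → M_n(ℂ)` placing `a` as the top-left `r × r`
block and zeros elsewhere. -/
def cornerEmbed {r n : ℕ} (h : r ≤ n) :
    Matrix (Fin r) (Fin r) ℂ →ₗ[ℂ] Matrix (Fin n) (Fin n) ℂ where
  toFun a := Matrix.of fun i j =>
    if hi : (i : ℕ) < r then if hj : (j : ℕ) < r then a ⟨i, hi⟩ ⟨j, hj⟩ else 0 else 0
  map_add' x y := by
    ext i j
    by_cases hi : (i : ℕ) < r <;> by_cases hj : (j : ℕ) < r <;> simp [hi, hj]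
  map_smul' c x := by
    ext i j
    by_cases hi : (i : ℕ) < r <;> by_cases hj : (j : ℕ) < r <;> simp [hi, hj]

/-! Let `ψ` be positive and vanish wherever `S ∘ φ` does. Testing against the basis vectors
`e_t` with `t ≥ r` shows that for positive `a` the diagonal of `ψ a` vanishes outside the
corner, so the positive semidefinite matrix `ψ a` is supported in the corner. Positive matrices
span `M_m(ℂ)`, hence `ψ = S ∘ ψ'` where `ψ'` compresses `ψ` to the corner. The compression
`ψ'` is positive and vanishes wherever `φ` does, so `ψ' = c • φ` because `φ` is exposed. -/

namespace Matrix

variable {ι κ : Type*} [Fintype ι]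

lemma PosSemidef.apply_eq_zero_of_diag_eq_zero {𝕜 : Type*} [RCLike 𝕜] {A : Matrix ι ι 𝕜}
    (hA : A.PosSemidef) {i : ι} (hi : A i i = 0) (j : ι) : A i j = 0 ∧ A j i = 0 := by
  classical
  have hcol : A *ᵥ Pi.single i 1 = 0 :=
    (hA.dotProduct_mulVec_zero_iff _).1 (by simpa using hi)
  have hji : A j i = 0 := by simpa using congrFun hcol j
  exact ⟨by rw [← hA.isHermitian.apply i j, hji, star_zero], hji⟩

lemma span_posSemidef : Submodule.span ℂ {A : Matrix ι ι ℂ | A.PosSemidef} = ⊤ := by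
  classical
  open MatrixOrder in
  simpa only [nonneg_iff_posSemidef] using CStarAlgebra.span_nonneg (A := Matrix ι ι ℂ)

lemma linearMap_ext_posSemidef {M : Type*} [AddCommMonoid M] [Module ℂ M]
    {f g : Matrix ι ι ℂ →ₗ[ℂ] M} (h : ∀ A : Matrix ι ι ℂ, A.PosSemidef → f A = g A) : f = g :=
  LinearMap.ext_on span_posSemidef h

lemma dotProduct_mulVec_eq_submatrix {R : Type*} [NonUnitalNonAssocSemiring R] [Star R]
    [Fintype κ] {e : κ → ι} (he : Function.Injective e) {M : Matrix ι ι R}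
    (hM : ∀ i ∉ Set.range e, ∀ j, M i j = 0 ∧ M j i = 0) (η : ι → R) :
    star η ⬝ᵥ M *ᵥ η = star (η ∘ e) ⬝ᵥ M.submatrix e e *ᵥ (η ∘ e) := by
  refine (Fintype.sum_of_injective e he _ _ (fun i hi => ?_) fun k => ?_).symm
  · simp [mulVec, dotProduct, (hM i hi _).1]
  · refine congrArg _ (Fintype.sum_of_injective e he _ _ (fun j hj => ?_) fun l => rfl)
    simp [(hM j hj _).2]

end Matrix

section Corner

variable {r n : ℕ} (h : r ≤ n)

lemma cornerEmbed_apply_castLE (a : Matrix (Fin r) (Fin r) ℂ) (i j : Fin r) :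
    cornerEmbed h a (Fin.castLE h i) (Fin.castLE h j) = a i j := by
  simp [cornerEmbed]

lemma cornerEmbed_apply_eq_zero (a : Matrix (Fin r) (Fin r) ℂ) {i : Fin n}
    (hi : i ∉ Set.range (Fin.castLE h)) (j : Fin n) :
    cornerEmbed h a i j = 0 ∧ cornerEmbed h a j i = 0 := by
  rw [Fin.range_castLE, Set.mem_ofPred_eq] at hi
  simp [cornerEmbed, hi]

lemma submatrix_cornerEmbed (a : Matrix (Fin r) (Fin r) ℂ) :
    (cornerEmbed h a).submatrix (Fin.castLE h) (Fin.castLE h) = a := by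
  ext i j
  exact cornerEmbed_apply_castLE h a i j

lemma cornerEmbed_submatrix_castLE {M : Matrix (Fin n) (Fin n) ℂ}
    (hM : ∀ i ∉ Set.range (Fin.castLE h), ∀ j, M i j = 0 ∧ M j i = 0) :
    cornerEmbed h (M.submatrix (Fin.castLE h) (Fin.castLE h)) = M := by
  ext i j
  by_cases hi : i ∈ Set.range (Fin.castLE h)
  · by_cases hj : j ∈ Set.range (Fin.castLE h)
    · obtain ⟨i, rfl⟩ := hi
      obtain ⟨j, rfl⟩ := hj
      exact cornerEmbed_apply_castLE h _ i j
    · rw [(cornerEmbed_apply_eq_zero h _ hj i).2, (hM j hj i).2]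
  · rw [(cornerEmbed_apply_eq_zero h _ hi j).1, (hM i hi j).1]

lemma dotProduct_cornerEmbed_mulVec (a : Matrix (Fin r) (Fin r) ℂ) (η : Fin n → ℂ) :
    star η ⬝ᵥ cornerEmbed h a *ᵥ η =
      star (η ∘ Fin.castLE h) ⬝ᵥ a *ᵥ (η ∘ Fin.castLE h) := by
  rw [dotProduct_mulVec_eq_submatrix (Fin.castLE_injective h)
    (fun i hi j => cornerEmbed_apply_eq_zero h a hi j), submatrix_cornerEmbed]

lemma conjTranspose_cornerEmbed (a : Matrix (Fin r) (Fin r) ℂ) :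
    (cornerEmbed h a)ᴴ = cornerEmbed h aᴴ := by
  ext i j
  by_cases hi : (i : ℕ) < r <;> by_cases hj : (j : ℕ) < r <;> simp [cornerEmbed, hi, hj]

lemma Matrix.PosSemidef.cornerEmbed {a : Matrix (Fin r) (Fin r) ℂ} (ha : a.PosSemidef) :
    (cornerEmbed h a).PosSemidef :=
  .of_dotProduct_mulVec_nonneg (by rw [IsHermitian, conjTranspose_cornerEmbed, ha.isHermitian])
    fun η => by rw [dotProduct_cornerEmbed_mulVec]; exact ha.dotProduct_mulVec_nonneg _

def cornerRestrict : Matrix (Fin n) (Fin n) ℂ →ₗ[ℂ] Matrix (Fin r) (Fin r) ℂ where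
  toFun M := M.submatrix (Fin.castLE h) (Fin.castLE h)
  map_add' M N := by rw [submatrix_add]; rfl
  map_smul' c M := by rw [submatrix_smul]; rfl

end Corner

/-- If `φ : M_m(ℂ) → M_r(ℂ)` is an exposed positive map and `r ≤ n`, then the
composition of `φ` with the corner embedding `S : M_r(ℂ) → M_n(ℂ)` is exposed. -/
theorem cornerEmbed_comp_isExposed {m r n : ℕ} (h : r ≤ n)
    (φ : Matrix (Fin m) (Fin m) ℂ →ₗ[ℂ] Matrix (Fin r) (Fin r) ℂ)
    (hφ : IsExposedMap φ) :
    IsExposedMap ((cornerEmbed h).comp φ) := by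
  refine ⟨fun a ha => (hφ.1 a ha).cornerEmbed h, fun ψ hψ hvanish => ?_⟩
  set ψ' := (cornerRestrict h).comp ψ
  have hfactor : ψ = (cornerEmbed h).comp ψ' := by
    refine linearMap_ext_posSemidef fun a ha => (cornerEmbed_submatrix_castLE h
      fun t ht => (hψ a ha).apply_eq_zero_of_diag_eq_zero ?_).symm
    have het : (Pi.single t 1 : Fin n → ℂ) ∘ Fin.castLE h = 0 :=
      funext fun k => Pi.single_eq_of_ne (fun hk => ht ⟨k, hk⟩) _
    simpa using hvanish a ha (Pi.single t 1)
      (by rw [LinearMap.comp_apply, dotProduct_cornerEmbed_mulVec, het]; simp)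
  have hψ'vanish : ∀ a : Matrix (Fin m) (Fin m) ℂ, a.PosSemidef → ∀ ξ : Fin r → ℂ,
      star ξ ⬝ᵥ φ a *ᵥ ξ = 0 → star ξ ⬝ᵥ ψ' a *ᵥ ξ = 0 := by
    intro a ha ξ hξ
    rw [← Function.extend_comp (Fin.castLE_injective h) ξ 0] at hξ ⊢
    have := hvanish a ha _ (by rwa [LinearMap.comp_apply, dotProduct_cornerEmbed_mulVec])
    rwa [hfactor, LinearMap.comp_apply, dotProduct_cornerEmbed_mulVec] at this
  obtain ⟨c, hc, hψ'⟩ := hφ.2 ψ' (fun a ha => (hψ a ha).submatrix _) hψ'vanish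
  exact ⟨c, hc, by rw [hfactor, hψ', LinearMap.comp_smul]⟩

end
end

section
/- Let a, b ≥ 0 be real numbers and α, β ∈ ℂ. Then the matrix ρ_{a,b,α,β} ∈ M_2(ℂ)⊗M_2(ℂ) is block-positive if and only if |α| + |β| ≤ √(ab). -/
open Matrix ComplexOrder

noncomputable section

/-- The product (simple tensor) vector `ξ ⊗ η` in `ℂ^m ⊗ ℂ^n = ℂ^{m × n}`. -/
def prodVec {m n : ℕ} (ξ : Fin m → ℂ) (η : Fin n → ℂ) : Fin m × Fin n → ℂ :=
  fun p => ξ p.1 * η p.2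

/-- A matrix `ρ ∈ M_m(ℂ) ⊗ M_n(ℂ)`, viewed as a matrix indexed by pairs via the
lexicographically ordered product basis, is block-positive if
`⟨ξ ⊗ η | ρ | ξ ⊗ η⟩ ≥ 0` for all `ξ ∈ ℂ^m`, `η ∈ ℂ^n`. -/
def BlockPos {m n : ℕ} (ρ : Matrix (Fin m × Fin n) (Fin m × Fin n) ℂ) : Prop :=
  ∀ (ξ : Fin m → ℂ) (η : Fin n → ℂ),
    0 ≤ star (prodVec ξ η) ⬝ᵥ ρ *ᵥ prodVec ξ η

/-- The matrix `ρ_{a,b,α,β} ∈ M_2(ℂ) ⊗ M_2(ℂ)`, given in the lexicographically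
ordered product basis by the rows `(a,0,0,α)`, `(0,0,β,0)`, `(0,β̄,0,0)`, `(ᾱ,0,0,b)`. -/
def rhoMat (a b : ℝ) (α β : ℂ) : Matrix (Fin 2 × Fin 2) (Fin 2 × Fin 2) ℂ :=
  Matrix.of fun p q =>
    if p = ((0 : Fin 2), (0 : Fin 2)) ∧ q = ((0 : Fin 2), (0 : Fin 2)) then (a : ℂ)
    else if p = ((1 : Fin 2), (1 : Fin 2)) ∧ q = ((1 : Fin 2), (1 : Fin 2)) then (b : ℂ)
    else if p = ((0 : Fin 2), (0 : Fin 2)) ∧ q = ((1 : Fin 2), (1 : Fin 2)) then α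
    else if p = ((1 : Fin 2), (1 : Fin 2)) ∧ q = ((0 : Fin 2), (0 : Fin 2)) then
      (starRingEnd ℂ) α
    else if p = ((0 : Fin 2), (1 : Fin 2)) ∧ q = ((1 : Fin 2), (0 : Fin 2)) then β
    else if p = ((1 : Fin 2), (0 : Fin 2)) ∧ q = ((0 : Fin 2), (1 : Fin 2)) then
      (starRingEnd ℂ) β
    else 0

/-! With `u = ξ₀η₀`, `v = ξ₁η₁`, `w = ξ₀η₁`, `z = ξ₁η₀` the expectation of `ρ` in `ξ ⊗ η` is
`a|u|² + b|v|² + 2 Re(α ū v) + 2 Re(β w̄ z)`, and `|u||v| = |w||z|`. Hence it is at least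
`a|u|² + b|v|² - 2(|α| + |β|)|u||v|`, with equality for `ξ = (s, pt)`, `η = (1, q)` once the
phases `p, q` satisfy `αpq = -|α|` and `βp q̄ = -|β|`; such phases exist since `p²` is then
prescribed. So block-positivity means `2(|α| + |β|) s t ≤ a s² + b t²` for `s, t ≥ 0`, which is
`|α| + |β| ≤ √(ab)` by AM-GM and the discriminant. -/

open ComplexConjugate

theorem forall_two_mul_mul_le_iff_le_sqrt {a b c : ℝ} (ha : 0 ≤ a) (hb : 0 ≤ b) (hc : 0 ≤ c) :
    (∀ s t : ℝ, 0 ≤ s → 0 ≤ t → 2 * c * s * t ≤ a * s ^ 2 + b * t ^ 2) ↔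
      c ≤ Real.sqrt (a * b) := by
  constructor
  · intro h
    -- for `s < 0` the bound is automatic because `c ≥ 0`
    have hquad : ∀ s : ℝ, 0 ≤ a * (s * s) + (-2 * c) * s + b := by
      intro s
      rcases le_total 0 s with hs | hs
      · linarith [h s 1 hs zero_le_one]
      · nlinarith [mul_nonneg ha (mul_self_nonneg s)]
    have hdisc := discrim_le_zero hquad
    rw [discrim] at hdisc
    exact Real.le_sqrt_of_sq_le (by nlinarith)
  · intro h s t hs ht
    have hsa := Real.sq_sqrt ha
    have hsb := Real.sq_sqrt hb
    have hamgm : 2 * Real.sqrt (a * b) * s * t ≤ a * s ^ 2 + b * t ^ 2 := by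
      rw [Real.sqrt_mul ha]
      nlinarith [sq_nonneg (Real.sqrt a * s - Real.sqrt b * t)]
    nlinarith [mul_nonneg hs ht]

open Complex in
theorem exists_phases_neg_norm (α β : ℂ) : ∃ p q : ℂ, ‖p‖ = 1 ∧ ‖q‖ = 1 ∧
    α * p * q = -‖α‖ ∧ β * p * conj q = -‖β‖ := by
  set θ := arg α
  set φ := arg β
  have hconj : conj (exp (↑((φ - θ) / 2) * I)) = exp (↑((θ - φ) / 2) * I) := by
    rw [← exp_conj, map_mul, conj_ofReal, conj_I]; congr 1; push_cast; ring
  refine ⟨exp (↑(-(θ + φ) / 2) * I), -exp (↑((φ - θ) / 2) * I), norm_exp_ofReal_mul_I _,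
    by rw [norm_neg, norm_exp_ofReal_mul_I], ?_, ?_⟩
  · calc α * exp (↑(-(θ + φ) / 2) * I) * -exp (↑((φ - θ) / 2) * I)
        = -‖α‖ * exp (θ * I + ↑(-(θ + φ) / 2) * I + ↑((φ - θ) / 2) * I) := by
          rw [exp_add, exp_add]; conv_lhs => rw [← norm_mul_exp_arg_mul_I α]
          ring
      _ = -‖α‖ := by push_cast; ring_nf; rw [exp_zero, mul_one]
  · calc β * exp (↑(-(θ + φ) / 2) * I) * conj (-exp (↑((φ - θ) / 2) * I))
        = -‖β‖ * exp (φ * I + ↑(-(θ + φ) / 2) * I + ↑((θ - φ) / 2) * I) := by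
          rw [map_neg, hconj, exp_add, exp_add]; conv_lhs => rw [← norm_mul_exp_arg_mul_I β]
          ring
      _ = -‖β‖ := by push_cast; ring_nf; rw [exp_zero, mul_one]

def rhoForm (a b : ℝ) (α β : ℂ) (ξ η : Fin 2 → ℂ) : ℝ :=
  a * ‖ξ 0 * η 0‖ ^ 2 + b * ‖ξ 1 * η 1‖ ^ 2
    + 2 * (α * conj (ξ 0 * η 0) * (ξ 1 * η 1)).re
    + 2 * (β * conj (ξ 0 * η 1) * (ξ 1 * η 0)).re

theorem rhoMat_expectation (a b : ℝ) (α β : ℂ) (ξ η : Fin 2 → ℂ) :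
    star (prodVec ξ η) ⬝ᵥ rhoMat a b α β *ᵥ prodVec ξ η = rhoForm a b α β ξ η := by
  simp only [rhoForm, Complex.ofReal_add, Complex.ofReal_mul, Complex.ofReal_pow,
    ← Complex.mul_conj', Complex.re_eq_add_conj]
  simp only [dotProduct, mulVec, prodVec, rhoMat, Fintype.sum_prod_type, Fin.sum_univ_two,
    Matrix.of_apply, Pi.star_apply, star_mul', RCLike.star_def]
  norm_num [Prod.ext_iff, Fin.ext_iff]
  ring

theorem blockPos_rhoMat_iff (a b : ℝ) (α β : ℂ) :
    BlockPos (rhoMat a b α β) ↔ ∀ ξ η, 0 ≤ rhoForm a b α β ξ η := by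
  simp only [BlockPos, rhoMat_expectation, Complex.zero_le_real]

theorem le_rhoForm (a b : ℝ) (α β : ℂ) (ξ η : Fin 2 → ℂ) :
    a * ‖ξ 0 * η 0‖ ^ 2 + b * ‖ξ 1 * η 1‖ ^ 2
      - 2 * (‖α‖ + ‖β‖) * ‖ξ 0 * η 0‖ * ‖ξ 1 * η 1‖ ≤ rhoForm a b α β ξ η := by
  have neg_norm_le_re (z : ℂ) : -‖z‖ ≤ z.re := (abs_le.mp (Complex.abs_re_le_norm z)).1
  have hα := neg_norm_le_re (α * conj (ξ 0 * η 0) * (ξ 1 * η 1))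
  have hβ := neg_norm_le_re (β * conj (ξ 0 * η 1) * (ξ 1 * η 0))
  simp only [rhoForm, norm_mul, Complex.norm_conj] at hα hβ ⊢
  nlinarith

theorem exists_rhoForm_eq (a b : ℝ) (α β : ℂ) (s t : ℝ) : ∃ ξ η : Fin 2 → ℂ,
    rhoForm a b α β ξ η = a * s ^ 2 + b * t ^ 2 - 2 * (‖α‖ + ‖β‖) * s * t := by
  obtain ⟨p, q, hp, hq, hαpq, hβpq⟩ := exists_phases_neg_norm α β
  refine ⟨![(s : ℂ), p * t], ![1, q], ?_⟩
  have hα : α * conj ((s : ℂ) * 1) * (p * t * q) = ↑(-‖α‖ * s * t) := by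
    rw [mul_one, Complex.conj_ofReal]; push_cast; linear_combination (↑s * ↑t : ℂ) * hαpq
  have hβ : β * conj ((s : ℂ) * q) * (p * t * 1) = ↑(-‖β‖ * s * t) := by
    rw [map_mul, Complex.conj_ofReal]; push_cast; linear_combination (↑s * ↑t : ℂ) * hβpq
  simp only [rhoForm, Matrix.cons_val_zero, Matrix.cons_val_one]
  rw [hα, hβ, Complex.ofReal_re, Complex.ofReal_re]
  simp only [norm_mul, hp, hq, Complex.norm_real, Real.norm_eq_abs, mul_one, one_mul, sq_abs]
  ring

/-- For `a, b ≥ 0` and `α, β ∈ ℂ`, the matrix `ρ_{a,b,α,β}` is block-positive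
if and only if `|α| + |β| ≤ √(ab)`. -/
theorem rhoMat_blockPos_iff (a b : ℝ) (ha : 0 ≤ a) (hb : 0 ≤ b) (α β : ℂ) :
    BlockPos (rhoMat a b α β) ↔ ‖α‖ + ‖β‖ ≤ Real.sqrt (a * b) := by
  rw [blockPos_rhoMat_iff, ← forall_two_mul_mul_le_iff_le_sqrt ha hb (by positivity)]
  constructor
  · intro h s t _ _
    obtain ⟨ξ, η, hξη⟩ := exists_rhoForm_eq a b α β s t
    linarith [h ξ η]
  · intro h ξ η
    linarith [le_rhoForm a b α β ξ η, h _ _ (norm_nonneg (ξ 0 * η 0)) (norm_nonneg (ξ 1 * η 1))]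

end
end

section
/- Suppose ρ ∈ M_2(ℂ)⊗M_2(ℂ) (a 4×4 complex matrix) is block-positive and at most one of its four diagonal entries is nonzero. Then every entry of ρ other than that diagonal entry is zero; in particular ρ has at most one nonzero entry, located on the diagonal. -/
open Matrix ComplexOrder

noncomputable section

/-! If `ρ q q = 0` and `p`, `q` share a row or a column index, then `e_p + c e_q` is a product
vector, and the form there is `ρ p p` plus a real-linear function of `c`; a real-linear function
bounded below vanishes, so `ρ p q = ρ q p = 0`. After permuting both factors so that the nonzero
diagonal entry sits at `(0, 0)`, only the four anti-diagonal entries are left; at `ξ = (1, s)`,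
`η = (1, t)` the form is `ρ (0,0) (0,0)` plus a term real-linear in `s`, and the same argument
kills them. -/

open scoped ComplexConjugate

namespace Complex

lemma eq_zero_of_forall_nonneg_add_ofReal_mul {w a : ℂ} (h : ∀ t : ℝ, 0 ≤ w + t * a) :
    a = 0 := by
  have him : a.im = 0 := by
    have h0 := (nonneg_iff.1 (h 0)).2
    have h1 := (nonneg_iff.1 (h 1)).2
    simp only [add_im, ofReal_zero, ofReal_one, zero_mul, one_mul, zero_im] at h0 h1
    linarith
  refine ext ?_ him
  by_contra hre
  have := (nonneg_iff.1 (h (-(w.re + 1) / a.re))).1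
  rw [add_re, re_ofReal_mul, div_mul_cancel₀ _ hre] at this
  linarith

lemma eq_zero_of_forall_conj_mul_add_mul_eq_zero {u v : ℂ}
    (h : ∀ c : ℂ, conj c * u + c * v = 0) : u = 0 ∧ v = 0 := by
  have h1 := h 1
  have hI := h I
  rw [map_one] at h1
  rw [conj_I] at hI
  constructor
  · linear_combination (h1 + I * hI) / 2 + (u - v) / 2 * I_sq
  · linear_combination (h1 - I * hI) / 2 + (v - u) / 2 * I_sq

lemma eq_zero_of_forall_nonneg_conj_mul_add_mul_add {u v w : ℂ}
    (h : ∀ c : ℂ, 0 ≤ conj c * u + c * v + w) : u = 0 ∧ v = 0 := by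
  refine eq_zero_of_forall_conj_mul_add_mul_eq_zero fun c ↦
    eq_zero_of_forall_nonneg_add_ofReal_mul (w := w) fun t ↦ ?_
  convert h (t * c) using 1
  rw [map_mul, conj_ofReal]
  ring

end Complex

lemma star_dotProduct_mulVec_single_add_smul_single {ι : Type*} [Fintype ι] [DecidableEq ι]
    (ρ : Matrix ι ι ℂ) (p q : ι) (c : ℂ) :
    star (Pi.single p 1 + c • Pi.single q 1) ⬝ᵥ ρ *ᵥ (Pi.single p 1 + c • Pi.single q 1) =
      ρ p p + c * ρ p q + conj c * ρ q p + conj c * c * ρ q q := by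
  simp only [star_add, star_smul, Pi.star_single, star_one, mulVec_add, mulVec_smul,
    mulVec_single_one, add_dotProduct, dotProduct_add, smul_dotProduct, dotProduct_smul,
    single_one_dotProduct, col_apply, smul_eq_mul, RCLike.star_def]
  ring

lemma exists_prodVec_eq_single_add_smul_single {m n : ℕ} {p q : Fin m × Fin n}
    (hpq : p.1 = q.1 ∨ p.2 = q.2) (c : ℂ) :
    ∃ ξ η, prodVec ξ η = Pi.single p 1 + c • Pi.single q 1 := by
  obtain ⟨p₁, p₂⟩ := p
  obtain ⟨q₁, q₂⟩ := q
  rcases hpq with rfl | rfl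
  · refine ⟨Pi.single p₁ 1, Pi.single p₂ 1 + c • Pi.single q₂ 1, funext fun ⟨i, j⟩ ↦ ?_⟩
    by_cases hi : i = p₁ <;> simp [prodVec, Pi.single_apply, hi]
  · refine ⟨Pi.single p₁ 1 + c • Pi.single q₁ 1, Pi.single p₂ 1, funext fun ⟨i, j⟩ ↦ ?_⟩
    by_cases hj : j = p₂ <;> simp [prodVec, Pi.single_apply, hj]

namespace BlockPos

section

variable {m n : ℕ} {ρ : Matrix (Fin m × Fin n) (Fin m × Fin n) ℂ}

lemma apply_eq_zero_of_diag_eq_zero (hρ : BlockPos ρ) {p q : Fin m × Fin n}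
    (hq : ρ q q = 0) (hpq : p.1 = q.1 ∨ p.2 = q.2) : ρ p q = 0 ∧ ρ q p = 0 := by
  refine (Complex.eq_zero_of_forall_nonneg_conj_mul_add_mul_add (w := ρ p p) fun c ↦ ?_).symm
  obtain ⟨ξ, η, hx⟩ := exists_prodVec_eq_single_add_smul_single hpq c
  have h := hρ ξ η
  rw [hx, star_dotProduct_mulVec_single_add_smul_single, hq] at h
  convert h using 1
  ring

lemma submatrix_prodCongr {m' n' : ℕ} (hρ : BlockPos ρ) (σ : Fin m' ≃ Fin m)
    (τ : Fin n' ≃ Fin n) : BlockPos (ρ.submatrix (σ.prodCongr τ) (σ.prodCongr τ)) := by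
  intro ξ η
  have hx : prodVec ξ η ∘ (σ.prodCongr τ).symm = prodVec (ξ ∘ σ.symm) (η ∘ τ.symm) := rfl
  have hx' : star (prodVec ξ η) ∘ (σ.prodCongr τ).symm =
      star (prodVec (ξ ∘ σ.symm) (η ∘ τ.symm)) := congrArg star hx
  rw [submatrix_mulVec_equiv, hx, ← comp_equiv_symm_dotProduct, hx']
  exact hρ _ _

lemma apply_eq_zero_of_diag_eq_zero_of_ne (hρ : BlockPos ρ) {p₀ : Fin m × Fin n}
    (hdiag : ∀ p, p ≠ p₀ → ρ p p = 0) {p q : Fin m × Fin n} (hpq : p.1 = q.1 ∨ p.2 = q.2)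
    (hne : ¬(p = p₀ ∧ q = p₀)) : ρ p q = 0 := by
  by_cases hq : q = p₀
  · have hp : p ≠ p₀ := fun hp ↦ hne ⟨hp, hq⟩
    exact (hρ.apply_eq_zero_of_diag_eq_zero (hdiag p hp) (hpq.imp Eq.symm Eq.symm)).2
  · exact (hρ.apply_eq_zero_of_diag_eq_zero (hdiag q hq) hpq).1

end

variable {ρ : Matrix (Fin 2 × Fin 2) (Fin 2 × Fin 2) ℂ}

lemma antidiag_eq_zero (hρ : BlockPos ρ) (hdiag : ∀ p, p ≠ (0, 0) → ρ p p = 0) :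
    ρ (1, 1) (0, 0) = 0 ∧ ρ (1, 0) (0, 1) = 0 ∧ ρ (0, 1) (1, 0) = 0 ∧ ρ (0, 0) (1, 1) = 0 := by
  have hline := fun p q ↦ hρ.apply_eq_zero_of_diag_eq_zero_of_ne hdiag (p := p) (q := q)
  have hQ : ∀ s t : ℂ, 0 ≤ conj s * (conj t * ρ (1, 1) (0, 0) + t * ρ (1, 0) (0, 1)) +
      s * (conj t * ρ (0, 1) (1, 0) + t * ρ (0, 0) (1, 1)) + ρ (0, 0) (0, 0) := by
    intro s t
    have h := hρ ![1, s] ![1, t]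
    simp only [dotProduct, mulVec, prodVec, Fintype.sum_prod_type, Fin.sum_univ_two] at h
    simp (disch := decide) only [hline] at h
    simp only [prodVec, Pi.star_apply, RCLike.star_def, Matrix.cons_val_zero, Matrix.cons_val_one,
      map_one, map_mul] at h
    convert h using 1
    ring
  have hs := fun t ↦ Complex.eq_zero_of_forall_nonneg_conj_mul_add_mul_add (hQ · t)
  obtain ⟨h₁, h₂⟩ := Complex.eq_zero_of_forall_conj_mul_add_mul_eq_zero fun t ↦ (hs t).1
  obtain ⟨h₃, h₄⟩ := Complex.eq_zero_of_forall_conj_mul_add_mul_eq_zero fun t ↦ (hs t).2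
  exact ⟨h₁, h₂, h₃, h₄⟩

lemma apply_eq_zero_of_diag_eq_zero_off_origin (hρ : BlockPos ρ)
    (hdiag : ∀ p, p ≠ (0, 0) → ρ p p = 0) (p q : Fin 2 × Fin 2)
    (hpq : ¬(p = (0, 0) ∧ q = (0, 0))) : ρ p q = 0 := by
  by_cases hline : p.1 = q.1 ∨ p.2 = q.2
  · exact hρ.apply_eq_zero_of_diag_eq_zero_of_ne hdiag hline hpq
  · obtain ⟨h₁, h₂, h₃, h₄⟩ := hρ.antidiag_eq_zero hdiag
    fin_cases p <;> fin_cases q <;> simp_all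

end BlockPos

/-- If a block-positive `ρ ∈ M_2(ℂ) ⊗ M_2(ℂ)` has at most one nonzero diagonal
entry (all diagonal entries other than the one at `p₀` vanish), then every entry of
`ρ` other than the `(p₀, p₀)` entry is zero. -/
theorem blockPos_at_most_one_diag (ρ : Matrix (Fin 2 × Fin 2) (Fin 2 × Fin 2) ℂ)
    (hρ : BlockPos ρ) (p₀ : Fin 2 × Fin 2) (hdiag : ∀ p, p ≠ p₀ → ρ p p = 0) :
    ∀ p q, ¬(p = p₀ ∧ q = p₀) → ρ p q = 0 := by
  obtain ⟨e, he, hρe⟩ : ∃ e : Fin 2 × Fin 2 ≃ Fin 2 × Fin 2,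
      e (0, 0) = p₀ ∧ BlockPos (ρ.submatrix e e) :=
    ⟨_, by simp, hρ.submatrix_prodCongr (Equiv.swap 0 p₀.1) (Equiv.swap 0 p₀.2)⟩
  have he' : ∀ p, e p = p₀ ↔ p = (0, 0) := fun p ↦ by rw [← he, e.apply_eq_iff_eq]
  have h := hρe.apply_eq_zero_of_diag_eq_zero_off_origin
    fun p hp ↦ hdiag (e p) ((he' p).not.2 hp)
  intro p q hpq
  have hpq' : ¬(e.symm p = (0, 0) ∧ e.symm q = (0, 0)) := by
    rwa [← he', ← he', e.apply_symm_apply, e.apply_symm_apply]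
  simpa only [submatrix_apply, e.apply_symm_apply] using h _ _ hpq'

end
end

section
/- The identity map id_2 : M_2(ℂ) → M_2(ℂ) is an exposed positive linear map. -/
/-!
If a positive map `ψ` vanishes wherever the identity does, then `ψ(ξξ*)` is a positive matrix
annihilating `ξ^⊥`, hence a multiple `c(ξ) • ξξ*`. Applying `ψ` to
`(eᵢ + a eⱼ)(eᵢ + a eⱼ)* + (eᵢ - a eⱼ)(eᵢ - a eⱼ)* = 2 eᵢeᵢ* + 2|a|² eⱼeⱼ*` and comparing entries
forces all these multiples to agree; by polarization the matrix units `eᵢeⱼ*` are then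
eigenvectors of `ψ` for one common eigenvalue `c`, so `ψ = c • id`, and `c ≥ 0` because `ψ 1`
is positive semidefinite.
-/

open Matrix ComplexOrder

noncomputable section

namespace Matrix

variable {𝕜 ι : Type*}

open Complex ComplexConjugate in
theorem two_smul_vecMulVec_star (ξ ζ : ι → ℂ) :
    (2 : ℂ) • vecMulVec ξ (star ζ) =
      vecMulVec (ξ + ζ) (star (ξ + ζ)) + I • vecMulVec (ξ + I • ζ) (star (ξ + I • ζ))
        - (1 + I) • (vecMulVec ξ (star ξ) + vecMulVec ζ (star ζ)) := by
  ext k l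
  simp only [Matrix.smul_apply, Matrix.sub_apply, Matrix.add_apply, vecMulVec_apply, Pi.add_apply,
    Pi.smul_apply, Pi.star_apply, star_add, star_smul, RCLike.star_def, conj_I, smul_eq_mul]
  linear_combination (ξ k * conj (ζ l) - ζ k * conj (ξ l) + I * ζ k * conj (ζ l)) * I_sq

variable [RCLike 𝕜] [Fintype ι]

theorem IsHermitian.eq_smul_vecMulVec_of_mulVec_eq_zero {M : Matrix ι ι 𝕜} (hM : M.IsHermitian)
    {ξ : ι → 𝕜} (h : ∀ η, star ξ ⬝ᵥ η = 0 → M *ᵥ η = 0) :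
    M = ((star ξ ⬝ᵥ M *ᵥ ξ) / (star ξ ⬝ᵥ ξ) ^ 2) • vecMulVec ξ (star ξ) := by
  set s := star ξ ⬝ᵥ ξ with hs_def
  -- the orthogonal projection onto `ℂ ξ` (and `0` when `ξ = 0`, as then `s⁻¹ = 0`)
  set Q := s⁻¹ • vecMulVec ξ (star ξ) with hQ_def
  have hs : star s = s := (star_dotProduct ξ ξ).symm
  have hQ : Qᴴ = Q := by
    rw [hQ_def, conjTranspose_smul, conjTranspose_vecMulVec, star_star, star_inv₀, hs]
  have hMQ : M * Q = M := by
    refine ext_iff_mulVec.mpr fun v => ?_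
    rw [← mulVec_mulVec, ← sub_eq_zero, ← mulVec_sub]
    refine h _ ?_
    rw [hQ_def, smul_mulVec, vecMulVec_mulVec, dotProduct_sub, dotProduct_smul, dotProduct_smul,
      ← hs_def, op_smul_eq_mul, smul_eq_mul]
    rcases eq_or_ne s 0 with hs0 | hs0
    · simp [dotProduct_star_self_eq_zero.mp hs0]
    · rw [inv_mul_cancel_left₀ hs0, sub_self]
  have hQM : Q * M = M := by
    simpa only [conjTranspose_mul, hQ, hM.eq] using congrArg (·ᴴ) hMQ
  calc M = Q * M * Q := by rw [hQM, hMQ]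
    _ = _ := by
      rw [Matrix.mul_assoc, hQ_def, smul_mul, Matrix.mul_smul, Matrix.mul_smul, mul_vecMulVec,
        vecMulVec_mul_vecMulVec, vecMulVec_smul, smul_smul, smul_smul]
      congr 1
      field_simp

variable [DecidableEq ι]

theorem apply_single_eq_of_map_vecMulVec_eq_smul {ψ : Matrix ι ι ℂ →ₗ[ℂ] Matrix ι ι ℂ}
    {c : (ι → ℂ) → ℂ} (hc : ∀ ξ, ψ (vecMulVec ξ (star ξ)) = c ξ • vecMulVec ξ (star ξ))
    {i j : ι} (hij : i ≠ j) {a : ℂ} (ha : a ≠ 0) :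
    c (Pi.single i 1 + a • Pi.single j 1) = c (Pi.single i 1) ∧
      c (Pi.single j 1) = c (Pi.single i 1) := by
  set e : ι → ι → ℂ := fun k => Pi.single k 1
  have hsum : vecMulVec (e i + a • e j) (star (e i + a • e j))
      + vecMulVec (e i + (-a) • e j) (star (e i + (-a) • e j))
      = (2 : ℂ) • vecMulVec (e i) (star (e i))
        + (2 * (a * star a)) • vecMulVec (e j) (star (e j)) := by
    simp only [star_add, star_smul, star_neg, add_vecMulVec, vecMulVec_add, smul_vecMulVec,
      vecMulVec_smul]
    module
  set p := c (e i + a • e j)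
  set q := c (e i + (-a) • e j)
  have hψ := congrArg ψ hsum
  simp only [map_add, map_smul, hc] at hψ
  have h_ij : p * star a + -(q * star a) = 0 := by
    simpa [e, p, q, vecMulVec_apply, hij, hij.symm] using congrFun (congrFun hψ i) j
  have h_ii : p + q = 2 * c (e i) := by
    simpa [e, p, q, vecMulVec_apply, hij, hij.symm] using congrFun (congrFun hψ i) i
  have h_jj : p * (a * star a) + q * (a * star a) = 2 * (a * star a) * c (e j) := by
    simpa [e, p, q, vecMulVec_apply, hij, hij.symm] using congrFun (congrFun hψ j) j
  have ha' : star a ≠ 0 := star_ne_zero.mpr ha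
  have hpq : p = q := mul_right_cancel₀ ha' (by linear_combination h_ij)
  have h_jj' : p + q = 2 * c (e j) :=
    mul_right_cancel₀ (mul_ne_zero ha ha') (by linear_combination h_jj)
  exact ⟨by linear_combination (h_ii + hpq) / 2, by linear_combination (h_ii - h_jj') / 2⟩

theorem exists_eq_smul_id_of_forall_map_vecMulVec_eq_smul (ψ : Matrix ι ι ℂ →ₗ[ℂ] Matrix ι ι ℂ)
    (h : ∀ ξ : ι → ℂ, ∃ c : ℂ, ψ (vecMulVec ξ (star ξ)) = c • vecMulVec ξ (star ξ)) :
    ∃ c : ℂ, ψ = c • LinearMap.id := by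
  choose c hc using h
  rcases isEmpty_or_nonempty ι with _ | ⟨⟨i₀⟩⟩
  · exact ⟨0, Subsingleton.elim _ _⟩
  set e : ι → ι → ℂ := fun k => Pi.single k 1
  set S := Module.End.eigenspace ψ (c (e i₀))
  have hmem : ∀ ξ, c ξ = c (e i₀) → vecMulVec ξ (star ξ) ∈ S := fun ξ hξ =>
    Module.End.mem_eigenspace_iff.mpr (hξ ▸ hc ξ)
  have hconst : ∀ i, c (e i) = c (e i₀) := fun i => by
    rcases eq_or_ne i₀ i with rfl | hi
    · rfl
    · exact (apply_single_eq_of_map_vecMulVec_eq_smul hc hi one_ne_zero).2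
  have hpair : ∀ {i j}, i ≠ j → ∀ a : ℂ, a ≠ 0 →
      vecMulVec (e i + a • e j) (star (e i + a • e j)) ∈ S := fun hij a ha =>
    hmem _ ((apply_single_eq_of_map_vecMulVec_eq_smul hc hij ha).1.trans (hconst _))
  refine ⟨c (e i₀), ext_linearMap (h := fun i j => LinearMap.ext_ring ?_)⟩
  suffices vecMulVec (e i) (star (e j)) ∈ S by
    simpa [single_eq_single_vecMulVec_single, e] using Module.End.mem_eigenspace_iff.mp this
  rcases eq_or_ne i j with rfl | hij
  · exact hmem _ (hconst i)
  · have h2 : (2 : ℂ) • vecMulVec (e i) (star (e j)) ∈ S := by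
      rw [two_smul_vecMulVec_star]
      refine sub_mem (add_mem ?_ (S.smul_mem _ (hpair hij _ Complex.I_ne_zero)))
        (S.smul_mem _ (add_mem (hmem _ (hconst i)) (hmem _ (hconst j))))
      simpa using hpair hij 1 one_ne_zero
    exact (S.smul_mem_iff two_ne_zero).mp h2

end Matrix

theorem IsPosMap.exists_map_vecMulVec_eq_smul {n : ℕ}
    {ψ : Matrix (Fin n) (Fin n) ℂ →ₗ[ℂ] Matrix (Fin n) (Fin n) ℂ} (hψ : IsPosMap ψ)
    (hz : ∀ a : Matrix (Fin n) (Fin n) ℂ, a.PosSemidef → ∀ η : Fin n → ℂ,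
      star η ⬝ᵥ a *ᵥ η = 0 → star η ⬝ᵥ (ψ a) *ᵥ η = 0) (ξ : Fin n → ℂ) :
    ∃ c : ℂ, ψ (vecMulVec ξ (star ξ)) = c • vecMulVec ξ (star ξ) := by
  have hξ := posSemidef_vecMulVec_self_star ξ
  have hψξ := hψ _ hξ
  refine ⟨_, hψξ.isHermitian.eq_smul_vecMulVec_of_mulVec_eq_zero fun η hη => ?_⟩
  refine (hψξ.dotProduct_mulVec_zero_iff η).mp (hz _ hξ η ?_)
  rw [vecMulVec_mulVec, hη]
  simp

theorem isExposedMap_id (n : ℕ) [NeZero n] :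
    IsExposedMap (LinearMap.id : Matrix (Fin n) (Fin n) ℂ →ₗ[ℂ] Matrix (Fin n) (Fin n) ℂ) := by
  refine ⟨fun a ha => ha, fun ψ hψ hz => ?_⟩
  obtain ⟨c, rfl⟩ :=
    exists_eq_smul_id_of_forall_map_vecMulVec_eq_smul _ (hψ.exists_map_vecMulVec_eq_smul hz)
  have hc : 0 ≤ c := by simpa using (hψ 1 PosSemidef.one).diag_nonneg (i := 0)
  obtain ⟨r, hr, rfl⟩ := RCLike.nonneg_iff_exists_ofReal.mp hc
  exact ⟨r, hr, rfl⟩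

/-- The identity map on `M_2(ℂ)` generates an exposed ray of the cone of positive
linear maps from `M_2(ℂ)` to `M_2(ℂ)`. -/
theorem id_two_isExposed :
    IsExposedMap (LinearMap.id : Matrix (Fin 2) (Fin 2) ℂ →ₗ[ℂ] Matrix (Fin 2) (Fin 2) ℂ) :=
  isExposedMap_id 2

end
end

section
/- For every r ≥ 1, the identity map id_r : M_r(ℂ) → M_r(ℂ) is an exposed positive linear map. -/
/-!
For `a ≥ 0` the hypothesis on `ψ` says `⟪η, ψ a η⟫ = 0` whenever `a η = 0`, and since `ψ a ≥ 0`
this means `ker a ⊆ ker (ψ a)`. Apply it to the projection `P` onto `ℂ ξ` and to `1 - P`: then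
`ψ P` kills `ξᗮ` and `ψ 1 ξ = ψ P ξ`. As `ψ P` is Hermitian, `ψ P ξ ∈ (ξᗮ)ᗮ = ℂ ξ`, so every vector
is an eigenvector of `ψ 1`, i.e. `ψ 1 = c • 1`. Hence `ψ P` and `c • P` agree on `ℂ ξ` and on `ξᗮ`,
so `ψ (ξ ξᴴ) = c • ξ ξᴴ` for all `ξ`. By polarization these matrices span `M_r(ℂ)`, so `ψ = c • id`,
and `c ≥ 0` because `ψ 1 ≥ 0`.
-/

open Matrix ComplexOrder

noncomputable section

namespace Matrix

variable {m n 𝕜 : Type*} [Fintype n] [RCLike 𝕜]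

theorem star_dotProduct_sub_div_smul_eq_zero (ξ v : n → 𝕜) :
    star ξ ⬝ᵥ (v - (star ξ ⬝ᵥ v / (star ξ ⬝ᵥ ξ)) • ξ) = 0 := by
  rcases eq_or_ne ξ 0 with rfl | hξ
  · simp
  have hs : star ξ ⬝ᵥ ξ ≠ 0 := dotProduct_star_self_eq_zero.not.mpr hξ
  rw [dotProduct_sub, dotProduct_smul, smul_eq_mul, div_mul_cancel₀ _ hs, sub_self]

theorem exists_eq_smul_of_forall_dotProduct_eq_zero {ξ ζ : n → 𝕜}
    (h : ∀ v, star ξ ⬝ᵥ v = 0 → star ζ ⬝ᵥ v = 0) : ∃ μ : 𝕜, ζ = μ • ξ := by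
  set μ := star ξ ⬝ᵥ ζ / (star ξ ⬝ᵥ ξ)
  have hξv := star_dotProduct_sub_div_smul_eq_zero ξ ζ
  refine ⟨μ, sub_eq_zero.mp (dotProduct_star_self_eq_zero.mp ?_)⟩
  rw [star_sub, sub_dotProduct, h _ hξv, star_smul, smul_dotProduct, hξv, smul_zero, sub_zero]

theorem eq_zero_of_mulVec_eq_zero_of_forall_orthogonal {M : Matrix m n 𝕜}
    {ξ : n → 𝕜} (hξ : M *ᵥ ξ = 0) (h : ∀ v, star ξ ⬝ᵥ v = 0 → M *ᵥ v = 0) : M = 0 := by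
  refine ext_iff_mulVec.mpr fun v => ?_
  have hv := h _ (star_dotProduct_sub_div_smul_eq_zero ξ v)
  rw [mulVec_sub, mulVec_smul, hξ, smul_zero, sub_zero] at hv
  rw [hv, zero_mulVec]

/-- The orthogonal projection onto the line spanned by `ξ` (zero when `ξ = 0`). -/
def rankOneProj (ξ : n → 𝕜) : Matrix n n 𝕜 := (star ξ ⬝ᵥ ξ)⁻¹ • vecMulVec ξ (star ξ)

theorem rankOneProj_mulVec (ξ v : n → 𝕜) :
    rankOneProj ξ *ᵥ v = (star ξ ⬝ᵥ v / (star ξ ⬝ᵥ ξ)) • ξ := by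
  rw [rankOneProj, smul_mulVec, vecMulVec_mulVec, op_smul_eq_smul, smul_smul, div_eq_inv_mul]

theorem rankOneProj_mulVec_self (ξ : n → 𝕜) : rankOneProj ξ *ᵥ ξ = ξ := by
  rcases eq_or_ne ξ 0 with rfl | hξ
  · simp
  rw [rankOneProj_mulVec, div_self (dotProduct_star_self_eq_zero.not.mpr hξ), one_smul]

theorem smul_rankOneProj (ξ : n → 𝕜) : (star ξ ⬝ᵥ ξ) • rankOneProj ξ = vecMulVec ξ (star ξ) := by
  rcases eq_or_ne ξ 0 with rfl | hξ
  · simp [rankOneProj]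
  rw [rankOneProj, smul_inv_smul₀ (dotProduct_star_self_eq_zero.not.mpr hξ)]

theorem isStarProjection_rankOneProj [DecidableEq n] (ξ : n → 𝕜) :
    IsStarProjection (rankOneProj ξ) where
  isIdempotentElem := by
    refine ext_iff_mulVec.mpr fun v => ?_
    rw [← mulVec_mulVec, rankOneProj_mulVec ξ v, mulVec_smul, rankOneProj_mulVec_self]
  isSelfAdjoint := by
    rw [IsSelfAdjoint, rankOneProj, star_smul, star_eq_conjTranspose, conjTranspose_vecMulVec,
      star_star, star_inv₀, ← star_dotProduct_star, star_star]

end Matrix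

theorem Matrix.vecMulVec_polarization {n : Type*} (ξ η : n → ℂ) :
    (4 : ℂ) • vecMulVec ξ (star η) =
      vecMulVec (ξ + η) (star (ξ + η)) - vecMulVec (ξ - η) (star (ξ - η)) +
        Complex.I • vecMulVec (ξ + Complex.I • η) (star (ξ + Complex.I • η)) -
        Complex.I • vecMulVec (ξ - Complex.I • η) (star (ξ - Complex.I • η)) := by
  ext i j
  simp [vecMulVec_apply]
  linear_combination
    (2 * ξ i * starRingEnd ℂ (η j) - 2 * η i * starRingEnd ℂ (ξ j)) * Complex.I_sq

namespace LinearMap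

open Matrix
open scoped MatrixOrder

variable {n : Type*} [Fintype n] [DecidableEq n] {ψ : Matrix n n ℂ →ₗ[ℂ] Matrix n n ℂ}

theorem eq_smul_id_of_map_vecMulVec_star_self {c : ℂ}
    (h : ∀ ξ : n → ℂ, ψ (vecMulVec ξ (star ξ)) = c • vecMulVec ξ (star ξ)) :
    ψ = c • LinearMap.id := by
  have hrankOne (ξ η : n → ℂ) : ψ (vecMulVec ξ (star η)) = c • vecMulVec ξ (star η) := by
    have h4 : ψ ((4 : ℂ) • vecMulVec ξ (star η)) = c • (4 : ℂ) • vecMulVec ξ (star η) := by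
      simp only [vecMulVec_polarization, map_sub, map_add, map_smul, h, smul_sub, smul_add,
        smul_comm c Complex.I]
    rw [map_smul, smul_comm c] at h4
    exact smul_right_injective _ four_ne_zero h4
  refine LinearMap.ext fun x => x.induction_on' (by simp) (fun p q hp hq => ?_) fun i j a => ?_
  · simp_all
  · have hsingle :
        Matrix.single i j a = a • vecMulVec (Pi.single i 1) (star (Pi.single j (1 : ℂ))) := by
      rw [← Pi.single_star, star_one, ← single_eq_single_vecMulVec_single, smul_single,
        smul_eq_mul, mul_one]
    rw [hsingle, map_smul, hrankOne, smul_apply, id_apply, smul_comm]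

section KernelPreserving

variable (hker : ∀ a : Matrix n n ℂ, a.PosSemidef → ∀ v, a *ᵥ v = 0 → ψ a *ᵥ v = 0)
include hker

theorem map_rankOneProj_mulVec_of_orthogonal {ξ v : n → ℂ} (hv : star ξ ⬝ᵥ v = 0) :
    ψ (rankOneProj ξ) *ᵥ v = 0 :=
  hker _ (isStarProjection_rankOneProj ξ).nonneg.posSemidef v
    (by rw [rankOneProj_mulVec, hv, zero_div, zero_smul])

theorem map_one_mulVec_eq_map_rankOneProj_mulVec (ξ : n → ℂ) :
    ψ 1 *ᵥ ξ = ψ (rankOneProj ξ) *ᵥ ξ := by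
  have h := hker _ (isStarProjection_rankOneProj ξ).one_sub_nonneg.posSemidef ξ
    (by rw [sub_mulVec, one_mulVec, rankOneProj_mulVec_self, sub_self])
  rwa [map_sub, sub_mulVec, sub_eq_zero] at h

theorem exists_map_one_eq_smul_one
    (hherm : ∀ a : Matrix n n ℂ, a.PosSemidef → (ψ a).IsHermitian) :
    ∃ c : ℂ, ψ 1 = c • 1 := by
  have heigen (ξ : n → ℂ) : ∃ μ : ℂ, ψ 1 *ᵥ ξ = μ • ξ := by
    rw [map_one_mulVec_eq_map_rankOneProj_mulVec hker]
    refine exists_eq_smul_of_forall_dotProduct_eq_zero fun v hv => ?_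
    have hH := hherm _ (isStarProjection_rankOneProj ξ).nonneg.posSemidef
    rw [star_mulVec, ← dotProduct_mulVec, hH.eq, map_rankOneProj_mulVec_of_orthogonal hker hv,
      dotProduct_zero]
  obtain ⟨c, hc⟩ := exists_eq_smul_id_of_forall_notLinearIndependent (f := toLin' (ψ 1))
    fun v hli => by
      obtain ⟨μ, hμ⟩ := heigen v
      have := LinearIndependent.pair_iff.mp hli μ (-1) (by simp [hμ])
      exact one_ne_zero (neg_eq_zero.mp this.2)
  exact ⟨c, toLin'.injective (by rw [hc, map_smul, toLin'_one]; rfl)⟩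

theorem map_rankOneProj_of_map_one_eq_smul_one {c : ℂ} (hc : ψ 1 = c • 1) (ξ : n → ℂ) :
    ψ (rankOneProj ξ) = c • rankOneProj ξ := by
  refine sub_eq_zero.mp (eq_zero_of_mulVec_eq_zero_of_forall_orthogonal (ξ := ξ) ?_ fun v hv => ?_)
  · rw [sub_mulVec, ← map_one_mulVec_eq_map_rankOneProj_mulVec hker, hc, smul_mulVec, smul_mulVec,
      one_mulVec, rankOneProj_mulVec_self, sub_self]
  · rw [sub_mulVec, map_rankOneProj_mulVec_of_orthogonal hker hv, smul_mulVec, rankOneProj_mulVec,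
      hv, zero_div, zero_smul, smul_zero, sub_self]

theorem exists_eq_smul_id_of_preserves_ker
    (hherm : ∀ a : Matrix n n ℂ, a.PosSemidef → (ψ a).IsHermitian) :
    ∃ c : ℂ, ψ = c • LinearMap.id := by
  obtain ⟨c, hc⟩ := exists_map_one_eq_smul_one hker hherm
  refine ⟨c, eq_smul_id_of_map_vecMulVec_star_self fun ξ => ?_⟩
  rw [← smul_rankOneProj, map_smul, map_rankOneProj_of_map_one_eq_smul_one hker hc, smul_comm]

end KernelPreserving

end LinearMap

/-- For every `r ≥ 1`, the identity map on `M_r(ℂ)` generates an exposed ray of the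
cone of positive linear maps from `M_r(ℂ)` to `M_r(ℂ)`. -/
theorem id_isExposed (r : ℕ) (hr : 1 ≤ r) :
    IsExposedMap (LinearMap.id : Matrix (Fin r) (Fin r) ℂ →ₗ[ℂ] Matrix (Fin r) (Fin r) ℂ) := by
  refine ⟨fun a ha => ha, fun ψ hψ hzero => ?_⟩
  have hker (a : Matrix (Fin r) (Fin r) ℂ) (ha : a.PosSemidef) (v : Fin r → ℂ)
      (hv : a *ᵥ v = 0) : ψ a *ᵥ v = 0 :=
    ((hψ a ha).dotProduct_mulVec_zero_iff v).mp
      (hzero a ha v (by rw [LinearMap.id_apply, hv, dotProduct_zero]))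
  obtain ⟨c, hc⟩ :=
    LinearMap.exists_eq_smul_id_of_preserves_ker hker fun a ha => (hψ a ha).isHermitian
  have hc0 : 0 ≤ c := by simpa [hc] using (hψ 1 PosSemidef.one).diag_nonneg (i := ⟨0, hr⟩)
  refine ⟨c.re, (Complex.nonneg_iff.mp hc0).1, ?_⟩
  rw [← Complex.eq_re_of_ofReal_le (r := 0) (by simpa using hc0), hc]

end
end

section
/- Suppose φ : M_m(ℂ) → M_n(ℂ) is a positive linear map which is unital (φ(I) = I), irreducible (every X ∈ M_n(ℂ) commuting with φ(a) for all a ∈ M_m(ℂ) is a scalar multiple of the identity), and satisfies ker φ̂ = N_φ. Then φ is exposed. -/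
open Matrix ComplexOrder

noncomputable section

/-- Woronowicz's map `φ̂ : M_m(ℂ) ⊗ ℂ^n → ℂ^n`, determined by `a ⊗ η ↦ φ(a) η`. -/
def hatMap {m n : ℕ} (φ : Matrix (Fin m) (Fin m) ℂ →ₗ[ℂ] Matrix (Fin n) (Fin n) ℂ) :
    TensorProduct ℂ (Matrix (Fin m) (Fin m) ℂ) (Fin n → ℂ) →ₗ[ℂ] (Fin n → ℂ) :=
  TensorProduct.lift (Matrix.toLin'.toLinearMap.comp φ)

/-- The subspace `N_φ ⊆ M_m(ℂ) ⊗ ℂ^n` spanned by the simple tensors `a ⊗ η`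
with `a` positive semidefinite and `φ(a) η = 0`. -/
def Nspace {m n : ℕ} (φ : Matrix (Fin m) (Fin m) ℂ →ₗ[ℂ] Matrix (Fin n) (Fin n) ℂ) :
    Submodule ℂ (TensorProduct ℂ (Matrix (Fin m) (Fin m) ℂ) (Fin n → ℂ)) :=
  Submodule.span ℂ
    {x | ∃ (a : Matrix (Fin m) (Fin m) ℂ) (η : Fin n → ℂ),
      a.PosSemidef ∧ (φ a) *ᵥ η = 0 ∧ x = a ⊗ₜ[ℂ] η}

/-!
If `ψ` vanishes wherever the quadratic forms of `φ` do, then `ψ̂` kills every generator of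
`N_φ = ker φ̂`. As `φ` is unital, `a ⊗ η - 1 ⊗ φ(a)η ∈ ker φ̂`, so `ψ(a) = ψ(1) φ(a)`. Taking
adjoints for positive `a` shows that `ψ(1)` commutes with `φ(a)`; positive matrices span
`M_m(ℂ)`, so it commutes with all of `φ(M_m(ℂ))` and irreducibility gives `ψ(1) = c • 1` with
`c ≥ 0` by positivity of `ψ(1)`.
-/

open MatrixOrder in
theorem Matrix.span_posSemidef_s7 {ι : Type*} [Fintype ι] [DecidableEq ι] :
    Submodule.span ℂ {a : Matrix ι ι ℂ | a.PosSemidef} = ⊤ := by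
  simpa only [Matrix.nonneg_iff_posSemidef] using CStarAlgebra.span_nonneg (A := Matrix ι ι ℂ)

theorem Matrix.exists_nonneg_real_of_posSemidef_smul_one {ι : Type*} [Fintype ι]
    [DecidableEq ι] {c : ℂ} (hc : (c • 1 : Matrix ι ι ℂ).PosSemidef) :
    ∃ r : ℝ, 0 ≤ r ∧ (c • 1 : Matrix ι ι ℂ) = (r : ℂ) • 1 := by
  rcases isEmpty_or_nonempty ι with _ | ⟨⟨i⟩⟩
  · exact ⟨0, le_rfl, Subsingleton.elim _ _⟩
  · have hc0 : 0 ≤ c := by simpa using hc.diag_nonneg (i := i)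
    obtain ⟨r, hr, rfl⟩ := RCLike.nonneg_iff_exists_ofReal.mp hc0
    exact ⟨r, hr, rfl⟩

section Woronowicz

variable {m n : ℕ} {φ ψ : Matrix (Fin m) (Fin m) ℂ →ₗ[ℂ] Matrix (Fin n) (Fin n) ℂ}

@[simp]
theorem hatMap_tmul (a : Matrix (Fin m) (Fin m) ℂ) (η : Fin n → ℂ) :
    hatMap φ (a ⊗ₜ η) = φ a *ᵥ η := by
  simp [hatMap, Matrix.toLin'_apply]

theorem Nspace_le_ker_hatMap (hψ : IsPosMap ψ)
    (hvan : ∀ a : Matrix (Fin m) (Fin m) ℂ, a.PosSemidef → ∀ η : Fin n → ℂ,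
      star η ⬝ᵥ (φ a) *ᵥ η = 0 → star η ⬝ᵥ (ψ a) *ᵥ η = 0) :
    Nspace φ ≤ LinearMap.ker (hatMap ψ) := by
  rw [Nspace, Submodule.span_le]
  rintro _ ⟨a, η, ha, hφa, rfl⟩
  have hψa : star η ⬝ᵥ (ψ a) *ᵥ η = 0 := hvan a ha η (by rw [hφa, dotProduct_zero])
  simpa using ((hψ a ha).dotProduct_mulVec_zero_iff η).mp hψa

theorem eq_mul_of_ker_hatMap_le (hunital : φ 1 = 1)
    (hker : LinearMap.ker (hatMap φ) ≤ LinearMap.ker (hatMap ψ))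
    (a : Matrix (Fin m) (Fin m) ℂ) : ψ a = ψ 1 * φ a := by
  refine Matrix.toLin'.injective (LinearMap.ext fun η => ?_)
  have hmem : a ⊗ₜ η - (1 : Matrix (Fin m) (Fin m) ℂ) ⊗ₜ (φ a *ᵥ η) ∈
      LinearMap.ker (hatMap φ) := by
    simp [hunital]
  have hψη := hker hmem
  simp only [LinearMap.mem_ker, map_sub, hatMap_tmul, sub_eq_zero] at hψη
  simp [Matrix.toLin'_apply, hψη, Matrix.mulVec_mulVec]

theorem commute_of_forall_eq_mul (hφ : IsPosMap φ) (hψ : IsPosMap ψ)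
    (hfactor : ∀ a, ψ a = ψ 1 * φ a) (a : Matrix (Fin m) (Fin m) ℂ) :
    Commute (ψ 1) (φ a) := by
  have hpsd : ∀ a : Matrix (Fin m) (Fin m) ℂ, a.PosSemidef → Commute (ψ 1) (φ a) := by
    intro a ha
    calc ψ 1 * φ a = (ψ 1 * φ a)ᴴ := by rw [← hfactor a, (hψ a ha).1.eq]
      _ = φ a * ψ 1 := by
        rw [Matrix.conjTranspose_mul, (hφ a ha).1.eq, (hψ 1 Matrix.PosSemidef.one).1.eq]
  have hspan : a ∈ Submodule.span ℂ {a : Matrix (Fin m) (Fin m) ℂ | a.PosSemidef} := by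
    rw [Matrix.span_posSemidef_s7]; trivial
  induction hspan using Submodule.span_induction with
  | mem a ha => exact hpsd a ha
  | zero => simp
  | add a b _ _ ha hb => simpa using ha.add_right hb
  | smul c a _ ha => simpa using ha.smul_right c

end Woronowicz

/-- (Woronowicz) A unital irreducible positive linear map `φ : M_m(ℂ) → M_n(ℂ)`
with `ker φ̂ = N_φ` is exposed. -/
theorem woronowicz_exposed {m n : ℕ}
    (φ : Matrix (Fin m) (Fin m) ℂ →ₗ[ℂ] Matrix (Fin n) (Fin n) ℂ)
    (hpos : IsPosMap φ) (hunital : φ 1 = 1)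
    (hirr : ∀ X : Matrix (Fin n) (Fin n) ℂ,
      (∀ a : Matrix (Fin m) (Fin m) ℂ, X * φ a = φ a * X) → ∃ c : ℂ, X = c • 1)
    (hker : LinearMap.ker (hatMap φ) = Nspace φ) :
    IsExposedMap φ := by
  refine ⟨hpos, fun ψ hψ hvan => ?_⟩
  have hfactor := eq_mul_of_ker_hatMap_le hunital (hker ▸ Nspace_le_ker_hatMap hψ hvan)
  obtain ⟨c, hc⟩ := hirr (ψ 1) (commute_of_forall_eq_mul hpos hψ hfactor)
  obtain ⟨r, hr, hcr⟩ :=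
    Matrix.exists_nonneg_real_of_posSemidef_smul_one (hc ▸ hψ 1 Matrix.PosSemidef.one)
  refine ⟨r, hr, LinearMap.ext fun a => ?_⟩
  rw [hfactor a, hc, hcr, LinearMap.smul_apply, Matrix.smul_mul, Matrix.one_mul]
end
end

section
/- Let φ, ψ : M_m(ℂ) → M_n(ℂ) be positive linear maps. Then the condition 'for every positive semidefinite a ∈ M_m(ℂ) and every vector η ∈ ℂ^n, ⟨η, φ(a)η⟩ = 0 implies ⟨η, ψ(a)η⟩ = 0' holds if and only if N_φ ⊆ N_ψ. -/
open Matrix ComplexOrder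

noncomputable section

/-- For positive maps `φ, ψ : M_m(ℂ) → M_n(ℂ)`, the zero-set condition
`⟨η, φ(a) η⟩ = 0 ⟹ ⟨η, ψ(a) η⟩ = 0` (for `a` positive semidefinite) holds
if and only if `N_φ ⊆ N_ψ`. -/
theorem zero_condition_iff_Nspace_le {m n : ℕ}
    (φ ψ : Matrix (Fin m) (Fin m) ℂ →ₗ[ℂ] Matrix (Fin n) (Fin n) ℂ)
    (hφ : IsPosMap φ) (hψ : IsPosMap ψ) :
    (∀ a : Matrix (Fin m) (Fin m) ℂ, a.PosSemidef → ∀ η : Fin n → ℂ,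
        star η ⬝ᵥ (φ a) *ᵥ η = 0 → star η ⬝ᵥ (ψ a) *ᵥ η = 0) ↔
      Nspace φ ≤ Nspace ψ := by
  constructor
  · intro h
    rw [Nspace, Submodule.span_le]
    rintro x ⟨a, η, ha, h0, rfl⟩
    apply Submodule.subset_span
    refine ⟨a, η, ha, ?_, rfl⟩
    exact ((hψ a ha).dotProduct_mulVec_zero_iff η).mp
      (h a ha η (((hφ a ha).dotProduct_mulVec_zero_iff η).mpr h0))
  · intro h a ha η hη
    have h0 : φ a *ᵥ η = 0 := ((hφ a ha).dotProduct_mulVec_zero_iff η).mp hη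
    have hmem : a ⊗ₜ[ℂ] η ∈ Nspace ψ := h (Submodule.subset_span ⟨a, η, ha, h0, rfl⟩)
    have hker : Nspace ψ ≤ LinearMap.ker (hatMap ψ) := by
      rw [Nspace, Submodule.span_le]
      rintro x ⟨b, ξ, hb, hb0, rfl⟩
      simp [hatMap, LinearMap.mem_ker, TensorProduct.lift.tmul, Matrix.toLin'_apply, hb0]
    have := hker hmem
    simp only [hatMap, LinearMap.mem_ker, TensorProduct.lift.tmul, LinearMap.comp_apply,
      LinearEquiv.coe_coe, Matrix.toLin'_apply] at this
    rw [this, dotProduct_zero]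

end
end

section
/- Suppose ρ ∈ M_2(ℂ)⊗M_2(ℂ) is block-positive and its diagonal entries at the positions indexed (1,2) and (2,1) (in the lexicographic product basis) are zero. Then ρ = ρ_{a,b,α,β} for some real a, b ≥ 0 and complex α, β; that is, all entries of ρ vanish except possibly the (1,1)- and (4,4)-diagonal entries, the (1,4)- and (4,1)-entries, and the (2,3)- and (3,2)-entries, with ρ Hermitian at these positions. -/
open Matrix ComplexOrder

noncomputable section

/-! Block-positivity already forces `ρ` to be Hermitian: `ρ - ρᴴ` has vanishing quadratic form on
product vectors, and polarizing first in `ξ` and then in `η` kills it. Fixing one tensor factor to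
a basis vector compresses `ρ` to a positive semidefinite matrix, in which a zero diagonal entry
forces its row and column to vanish. For the diagonal zeros at `(1,2)` and `(2,1)` this kills
every entry of `ρ` outside the pattern of `ρ_{a,b,α,β}`. -/

theorem Matrix.eq_zero_of_forall_star_dotProduct_mulVec_self {n : Type*} [Fintype n]
    {A : Matrix n n ℂ} (h : ∀ x, star x ⬝ᵥ A *ᵥ x = 0) : A = 0 := by
  classical
  have hT : A.toEuclideanLin = 0 := (inner_map_self_eq_zero _).mp fun x => by
    rw [EuclideanSpace.inner_eq_star_dotProduct, dotProduct_star, dotProduct_comm]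
    simpa using congrArg star (h x.ofLp)
  simpa using hT

theorem Matrix.PosSemidef.apply_eq_zero_of_apply_self_eq_zero {n 𝕜 : Type*} [Fintype n]
    [RCLike 𝕜] {A : Matrix n n 𝕜} (hA : A.PosSemidef) {i : n} (hi : A i i = 0) (j : n) :
    A j i = 0 := by
  classical
  have hcol : A *ᵥ Pi.single i 1 = 0 := (hA.dotProduct_mulVec_zero_iff _).mp (by simp [hi])
  simpa using congrFun hcol j

section ProductVectors

variable {m n : ℕ}

theorem star_prodVec_dotProduct_mulVec (K : Matrix (Fin m × Fin n) (Fin m × Fin n) ℂ)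
    (ξ : Fin m → ℂ) (η : Fin n → ℂ) :
    star (prodVec ξ η) ⬝ᵥ K *ᵥ prodVec ξ η =
      star ξ ⬝ᵥ (of fun i j => star η ⬝ᵥ (comp _ _ _ _ ℂ).symm K i j *ᵥ η) *ᵥ ξ := by
  simp only [prodVec, dotProduct, mulVec, Fintype.sum_prod_type, Pi.star_apply, star_mul,
    of_apply, comp_symm_apply, Finset.mul_sum, Finset.sum_mul]
  refine Finset.sum_congr rfl fun i _ => ?_
  rw [Finset.sum_comm]
  exact Finset.sum_congr rfl fun j _ => Finset.sum_congr rfl fun k _ =>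
    Finset.sum_congr rfl fun l _ => by ring

theorem eq_zero_of_forall_star_prodVec_dotProduct_mulVec
    {K : Matrix (Fin m × Fin n) (Fin m × Fin n) ℂ}
    (h : ∀ ξ η, star (prodVec ξ η) ⬝ᵥ K *ᵥ prodVec ξ η = 0) : K = 0 := by
  ext ⟨i, k⟩ ⟨j, l⟩
  have hslice (η : Fin n → ℂ) :
      (of fun i j => star η ⬝ᵥ (comp _ _ _ _ ℂ).symm K i j *ᵥ η) = 0 :=
    eq_zero_of_forall_star_dotProduct_mulVec_self fun ξ => by
      rw [← star_prodVec_dotProduct_mulVec]; exact h ξ η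
  have hblock : (comp _ _ _ _ ℂ).symm K i j = 0 :=
    eq_zero_of_forall_star_dotProduct_mulVec_self fun η => congrFun₂ (hslice η) i j
  exact congrFun₂ hblock k l

namespace BlockPos

variable {ρ : Matrix (Fin m × Fin n) (Fin m × Fin n) ℂ}

theorem isHermitian (hρ : BlockPos ρ) : ρ.IsHermitian := by
  refine sub_eq_zero.mp (eq_zero_of_forall_star_prodVec_dotProduct_mulVec fun ξ η => ?_)
  have hreal := (IsSelfAdjoint.of_nonneg (hρ ξ η)).star_eq
  rw [sub_mulVec, dotProduct_sub, sub_eq_zero, ← hreal, star_dotProduct, star_mulVec,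
    dotProduct_mulVec]
  simp

theorem posSemidef_submatrix_left (hρ : BlockPos ρ) (k : Fin n) :
    (ρ.submatrix (·, k) (·, k)).PosSemidef := by
  refine .of_dotProduct_mulVec_nonneg (hρ.isHermitian.submatrix _) fun ξ => ?_
  simpa [prodVec, dotProduct, mulVec, Fintype.sum_prod_type, Pi.single_apply,
    apply_ite (starRingEnd ℂ), ite_mul] using hρ ξ (Pi.single k 1)

theorem posSemidef_submatrix_right (hρ : BlockPos ρ) (i : Fin m) :
    (ρ.submatrix (i, ·) (i, ·)).PosSemidef := by
  refine .of_dotProduct_mulVec_nonneg (hρ.isHermitian.submatrix _) fun η => ?_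
  simpa [prodVec, dotProduct, mulVec, Fintype.sum_prod_type, Pi.single_apply,
    apply_ite (starRingEnd ℂ), ite_mul] using hρ (Pi.single i 1) η

theorem apply_self_nonneg (hρ : BlockPos ρ) (i : Fin m) (k : Fin n) : 0 ≤ ρ (i, k) (i, k) :=
  (hρ.posSemidef_submatrix_left k).diag_nonneg

end BlockPos

end ProductVectors

/-- If `ρ ∈ M_2(ℂ) ⊗ M_2(ℂ)` is block-positive and its diagonal entries at the
positions `(1,2)` and `(2,1)` of the lexicographic product basis vanish, then
`ρ = ρ_{a,b,α,β}` for some reals `a, b ≥ 0` and complex `α, β`. -/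
theorem blockPos_two_zero_diag (ρ : Matrix (Fin 2 × Fin 2) (Fin 2 × Fin 2) ℂ)
    (hρ : BlockPos ρ)
    (h01 : ρ ((0 : Fin 2), (1 : Fin 2)) ((0 : Fin 2), (1 : Fin 2)) = 0)
    (h10 : ρ ((1 : Fin 2), (0 : Fin 2)) ((1 : Fin 2), (0 : Fin 2)) = 0) :
    ∃ (a b : ℝ) (α β : ℂ), 0 ≤ a ∧ 0 ≤ b ∧ ρ = rhoMat a b α β := by
  have hH := hρ.isHermitian
  have zero_symm (p q) (h : ρ p q = 0) : ρ q p = 0 := by rw [← hH.apply, h, star_zero]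
  have h11_01 : ρ (1, 1) (0, 1) = 0 :=
    (hρ.posSemidef_submatrix_left 1).apply_eq_zero_of_apply_self_eq_zero h01 1
  have h00_01 : ρ (0, 0) (0, 1) = 0 :=
    (hρ.posSemidef_submatrix_right 0).apply_eq_zero_of_apply_self_eq_zero h01 0
  have h00_10 : ρ (0, 0) (1, 0) = 0 :=
    (hρ.posSemidef_submatrix_left 0).apply_eq_zero_of_apply_self_eq_zero h10 0
  have h11_10 : ρ (1, 1) (1, 0) = 0 :=
    (hρ.posSemidef_submatrix_right 1).apply_eq_zero_of_apply_self_eq_zero h10 1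
  obtain ⟨a, ha, hρa⟩ := RCLike.nonneg_iff_exists_ofReal.mp (hρ.apply_self_nonneg 0 0)
  obtain ⟨b, hb, hρb⟩ := RCLike.nonneg_iff_exists_ofReal.mp (hρ.apply_self_nonneg 1 1)
  refine ⟨a, b, ρ (0, 0) (1, 1), ρ (0, 1) (1, 0), ha, hb, ?_⟩
  ext ⟨i, k⟩ ⟨j, l⟩
  fin_cases i <;> fin_cases k <;> fin_cases j <;> fin_cases l <;>
    simp [rhoMat, h01, h10, h11_01, h00_01, h00_10, h11_10, zero_symm _ _ h11_01,
      zero_symm _ _ h00_01, zero_symm _ _ h00_10, zero_symm _ _ h11_10, ← hρa, ← hρb,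
      ← hH.apply (1, 1) (0, 0), ← hH.apply (1, 0) (0, 1)]

end
end

section
/- Let φ : M_m(ℂ) → M_n(ℂ) be a positive linear map and let t denote the transpose map on M_m(ℂ). Then φ is exposed if and only if φ ∘ t : M_m(ℂ) → M_n(ℂ), x ↦ φ(xᵀ), is exposed. -/
open Matrix ComplexOrder

noncomputable section

lemma transposeLM_apply {m : ℕ} (x : Matrix (Fin m) (Fin m) ℂ) :
    transposeLM m x = xᵀ := rfl

lemma transposeLM_involutive {m : ℕ} :
    (transposeLM m).comp (transposeLM m) = LinearMap.id := by
  ext x i j; simp [transposeLM_apply]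

lemma isPosMap_comp_transpose {m n : ℕ}
    {φ : Matrix (Fin m) (Fin m) ℂ →ₗ[ℂ] Matrix (Fin n) (Fin n) ℂ}
    (hφ : IsPosMap φ) : IsPosMap (φ.comp (transposeLM m)) := by
  intro a ha
  exact hφ aᵀ ha.transpose

lemma isExposedMap_comp_transpose {m n : ℕ}
    {φ : Matrix (Fin m) (Fin m) ℂ →ₗ[ℂ] Matrix (Fin n) (Fin n) ℂ}
    (h : IsExposedMap φ) : IsExposedMap (φ.comp (transposeLM m)) := by
  obtain ⟨hpos, hexp⟩ := h
  refine ⟨isPosMap_comp_transpose hpos, ?_⟩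
  intro ψ hψ hzero
  have key : ∀ a : Matrix (Fin m) (Fin m) ℂ, a.PosSemidef → ∀ η : Fin n → ℂ,
      star η ⬝ᵥ (φ a) *ᵥ η = 0 → star η ⬝ᵥ ((ψ.comp (transposeLM m)) a) *ᵥ η = 0 := by
    intro a ha η hη
    have h2 := hzero aᵀ ha.transpose η
    simp only [LinearMap.comp_apply, transposeLM_apply, Matrix.transpose_transpose] at h2 ⊢
    exact h2 hη
  obtain ⟨c, hc, hcψ⟩ := hexp (ψ.comp (transposeLM m)) (isPosMap_comp_transpose hψ) key
  refine ⟨c, hc, ?_⟩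
  have h3 : (ψ.comp (transposeLM m)).comp (transposeLM m)
      = ((c : ℂ) • φ).comp (transposeLM m) := by rw [hcψ]
  rw [LinearMap.comp_assoc, transposeLM_involutive] at h3
  simpa [LinearMap.smul_comp] using h3

/-- A positive map `φ : M_m(ℂ) → M_n(ℂ)` is exposed iff `φ ∘ t : x ↦ φ(xᵀ)` is exposed. -/
theorem isExposed_comp_transpose_iff {m n : ℕ}
    (φ : Matrix (Fin m) (Fin m) ℂ →ₗ[ℂ] Matrix (Fin n) (Fin n) ℂ)
    (hφ : IsPosMap φ) :
    IsExposedMap φ ↔ IsExposedMap (φ.comp (transposeLM m)) := by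
  constructor
  · exact isExposedMap_comp_transpose
  · intro h
    have := isExposedMap_comp_transpose h
    rwa [LinearMap.comp_assoc, transposeLM_involutive, LinearMap.comp_id] at this

end
end

section
/- Let φ : M_m(ℂ) → M_n(ℂ) be a positive linear map which is unital (φ(I) = I) and satisfies ker φ̂ = N_φ. If ψ : M_m(ℂ) → M_n(ℂ) is a positive linear map such that for every positive semidefinite a ∈ M_m(ℂ) and every η ∈ ℂ^n, ⟨η, φ(a)η⟩ = 0 implies ⟨η, ψ(a)η⟩ = 0, then there exists a matrix X ∈ M_n(ℂ) with ψ(a) = X·φ(a) (matrix product) for all a ∈ M_m(ℂ). -/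
open Matrix ComplexOrder

noncomputable section

/-- If `φ : M_m(ℂ) → M_n(ℂ)` is a unital positive map with `ker φ̂ = N_φ`, and `ψ` is
a positive map such that `⟨η, φ(a) η⟩ = 0` implies `⟨η, ψ(a) η⟩ = 0` for `a` positive
semidefinite, then `ψ(a) = X φ(a)` for some fixed matrix `X ∈ M_n(ℂ)`. -/
theorem exists_factor_of_ker_hatMap_eq_Nspace {m n : ℕ}
    (φ ψ : Matrix (Fin m) (Fin m) ℂ →ₗ[ℂ] Matrix (Fin n) (Fin n) ℂ)
    (hφ : IsPosMap φ) (hunital : φ 1 = 1)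
    (hker : LinearMap.ker (hatMap φ) = Nspace φ)
    (hψ : IsPosMap ψ)
    (hcond : ∀ a : Matrix (Fin m) (Fin m) ℂ, a.PosSemidef → ∀ η : Fin n → ℂ,
      star η ⬝ᵥ (φ a) *ᵥ η = 0 → star η ⬝ᵥ (ψ a) *ᵥ η = 0) :
    ∃ X : Matrix (Fin n) (Fin n) ℂ, ∀ a : Matrix (Fin m) (Fin m) ℂ, ψ a = X * φ a := by
  use ψ 1
  -- ψ̂ vanishes on N_φ
  have hNsub : Nspace φ ≤ LinearMap.ker (hatMap ψ) := by
    rw [Nspace, Submodule.span_le]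
    rintro x ⟨a, η, ha, hzero, rfl⟩
    have h1 : star η ⬝ᵥ (φ a) *ᵥ η = 0 := by rw [hzero, dotProduct_zero]
    have h2 := hcond a ha η h1
    have h3 : (ψ a) *ᵥ η = 0 := ((hψ a ha).dotProduct_mulVec_zero_iff η).mp h2
    simp only [SetLike.mem_coe, LinearMap.mem_ker, hatMap, TensorProduct.lift.tmul,
      LinearMap.coe_comp, Function.comp_apply, LinearEquiv.coe_toLinearMap,
      Matrix.toLin'_apply, h3]
  -- main computation
  intro a
  ext i j
  have key : ∀ η : Fin n → ℂ, (ψ a) *ᵥ η = (ψ 1) *ᵥ ((φ a) *ᵥ η) := by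
    intro η
    have hmem : a ⊗ₜ[ℂ] η - (1 : Matrix (Fin m) (Fin m) ℂ) ⊗ₜ[ℂ] ((φ a) *ᵥ η) ∈
        LinearMap.ker (hatMap φ) := by
      simp only [LinearMap.mem_ker, map_sub, hatMap, TensorProduct.lift.tmul,
        LinearMap.coe_comp, Function.comp_apply, LinearEquiv.coe_toLinearMap,
        Matrix.toLin'_apply, hunital, Matrix.one_mulVec, sub_self]
    rw [hker] at hmem
    have := hNsub hmem
    simp only [LinearMap.mem_ker, map_sub, hatMap, TensorProduct.lift.tmul,
      LinearMap.coe_comp, Function.comp_apply, LinearEquiv.coe_toLinearMap,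
      Matrix.toLin'_apply, sub_eq_zero] at this
    exact this
  have := key (Pi.single j 1)
  have h1 : ((ψ a) *ᵥ (Pi.single j 1)) i = ψ a i j := by
    simp [Matrix.mulVec_single]
  have h2 : ((ψ 1) *ᵥ ((φ a) *ᵥ (Pi.single j 1))) i = (ψ 1 * φ a) i j := by
    rw [Matrix.mulVec_mulVec]
    simp [Matrix.mulVec_single]
  rw [← h1, this, h2]


end
end

section
/- Let φ : M_m(ℂ) → M_n(ℂ) be a positive linear map which is unital (φ(I) = I) and irreducible (every matrix in M_n(ℂ) commuting with φ(a) for all a ∈ M_m(ℂ) is a scalar multiple of the identity). If ψ : M_m(ℂ) → M_n(ℂ) is a positive linear map and X ∈ M_n(ℂ) satisfies ψ(a) = X·φ(a) for all a ∈ M_m(ℂ), then X = λI for some λ ≥ 0, and hence ψ = λφ. -/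
open Matrix ComplexOrder

noncomputable section

/-!
`X = ψ 1` is positive semidefinite, hence Hermitian. Positive maps commute with `ᴴ`, so
`X φ(a) = ψ(a) = ψ(aᴴ)ᴴ = φ(a) X`; irreducibility makes `X` a scalar, and positivity of `X`
makes that scalar a nonnegative real.
-/

open scoped MatrixOrder

lemma exists_nonneg_real_smul_one_eq_of_posSemidef {ι 𝕜 : Type*} [Fintype ι] [DecidableEq ι]
    [RCLike 𝕜] {c : 𝕜} (hc : (c • (1 : Matrix ι ι 𝕜)).PosSemidef) :
    ∃ r : ℝ, 0 ≤ r ∧ c • (1 : Matrix ι ι 𝕜) = (r : 𝕜) • 1 := by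
  rcases isEmpty_or_nonempty ι with _ | ⟨⟨i⟩⟩
  · exact ⟨0, le_rfl, Subsingleton.elim _ _⟩
  · rw [smul_one_eq_diagonal, posSemidef_diagonal_iff] at hc
    obtain ⟨r, hr, rfl⟩ := RCLike.nonneg_iff_exists_ofReal.mp (hc i)
    exact ⟨r, hr, rfl⟩

namespace IsPosMap

variable {m n : ℕ} {φ ψ : Matrix (Fin m) (Fin m) ℂ →ₗ[ℂ] Matrix (Fin n) (Fin n) ℂ}

def toPositiveLinearMap (hφ : IsPosMap φ) :
    Matrix (Fin m) (Fin m) ℂ →ₚ[ℂ] Matrix (Fin n) (Fin n) ℂ :=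
  .mk₀ φ fun a ha => (hφ a (nonneg_iff_posSemidef.mp ha)).nonneg

/-- Hermitian matrices are differences of positive ones, so a positive map preserves them;
`ℂ`-linearity and `a = ℜ a + I • ℑ a` then give compatibility with `ᴴ`. -/
theorem map_conjTranspose (hφ : IsPosMap φ) (a : Matrix (Fin m) (Fin m) ℂ) :
    φ aᴴ = (φ a)ᴴ :=
  map_star hφ.toPositiveLinearMap a

theorem commute_of_eq_mul (hφ : IsPosMap φ) (hψ : IsPosMap ψ) {X : Matrix (Fin n) (Fin n) ℂ}
    (hX : X.IsHermitian) (hψφ : ∀ a, ψ a = X * φ a) (a : Matrix (Fin m) (Fin m) ℂ) :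
    X * φ a = φ a * X :=
  calc X * φ a = (ψ aᴴ)ᴴ := by rw [hψ.map_conjTranspose, conjTranspose_conjTranspose, hψφ]
    _ = (φ aᴴ)ᴴ * Xᴴ := by rw [hψφ, conjTranspose_mul]
    _ = φ a * X := by rw [hφ.map_conjTranspose, conjTranspose_conjTranspose, hX.eq]

end IsPosMap

/-- If `φ : M_m(ℂ) → M_n(ℂ)` is a unital irreducible positive map, `ψ` is a positive
map, and `X ∈ M_n(ℂ)` satisfies `ψ(a) = X φ(a)` for all `a`, then `X = λ I` for some
`λ ≥ 0` and hence `ψ = λ φ`. -/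
theorem scalar_of_factor_unital_irreducible {m n : ℕ}
    (φ ψ : Matrix (Fin m) (Fin m) ℂ →ₗ[ℂ] Matrix (Fin n) (Fin n) ℂ)
    (hφ : IsPosMap φ) (hunital : φ 1 = 1)
    (hirr : ∀ Y : Matrix (Fin n) (Fin n) ℂ,
      (∀ a : Matrix (Fin m) (Fin m) ℂ, Y * φ a = φ a * Y) → ∃ c : ℂ, Y = c • 1)
    (hψ : IsPosMap ψ)
    (X : Matrix (Fin n) (Fin n) ℂ)
    (hX : ∀ a : Matrix (Fin m) (Fin m) ℂ, ψ a = X * φ a) :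
    ∃ lam : ℝ, 0 ≤ lam ∧ X = (lam : ℂ) • 1 ∧ ψ = (lam : ℂ) • φ := by
  have hXpos : X.PosSemidef := by
    simpa [hX 1, hunital] using hψ 1 PosSemidef.one
  obtain ⟨c, rfl⟩ := hirr X (hφ.commute_of_eq_mul hψ hXpos.isHermitian hX)
  obtain ⟨lam, hlam, hc⟩ := exists_nonneg_real_smul_one_eq_of_posSemidef hXpos
  refine ⟨lam, hlam, hc, LinearMap.ext fun a => ?_⟩
  rw [hX, hc, smul_one_mul]
  rfl

end
end
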